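/- arXiv:1501.03032 — 7 statements merged into one kernel-verified Lean document; each statement's English description precedes it below -/
import Mathlib

section
/- Let α, β > -1 be real numbers, let N, M be nonnegative integers, and let a = [a_0,…,a_N], b = [b_0,…,b_M] be real vectors. Then ∫₀¹ (1-t)^α t^β (Σ_{i=0}^{N} a_i B_i^N(t)) (Σ_{j=0}^{M} b_j B_j^M(t)) dt = I_{NM}(a,b), where I_{NM}(a,b) := (B(α+1,β+1)/(α+β+2)_{N+M}) · Σ_{i=0}^{N} Σ_{j=0}^{M} C(N,i) C(M,j) (α+1)_{N+M-i-j} (β+1)_{i+j} a_i b_j. -/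
open MeasureTheory Polynomial

/-- Bernstein polynomial `B_i^n(t) = C(n,i) t^i (1-t)^{n-i}` as a real function. -/
noncomputable def bern (n i : ℕ) (t : ℝ) : ℝ := (n.choose i : ℝ) * t ^ i * (1 - t) ^ (n - i)

/-- Pochhammer symbol `(a)_k = a(a+1)⋯(a+k-1)`. -/
noncomputable def poch (a : ℝ) (k : ℕ) : ℝ := (ascPochhammer ℝ k).eval a

/-- Beta function `B(x,y) = Γ(x)Γ(y)/Γ(x+y)`. -/
noncomputable def betaFn (x y : ℝ) : ℝ := Real.Gamma x * Real.Gamma y / Real.Gamma (x + y)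

/-- `I_{NM}(a,b)` from the paper. -/
noncomputable def Ifun (α β : ℝ) (N M : ℕ) (a : Fin (N + 1) → ℝ) (b : Fin (M + 1) → ℝ) : ℝ :=
  betaFn (α + 1) (β + 1) / poch (α + β + 2) (N + M) *
    ∑ i : Fin (N + 1), ∑ j : Fin (M + 1),
      (N.choose i : ℝ) * (M.choose j : ℝ) *
        poch (α + 1) (N + M - (i : ℕ) - (j : ℕ)) * poch (β + 1) ((i : ℕ) + (j : ℕ)) *
        a i * b j

lemma poch_pos {x : ℝ} (hx : 0 < x) (n : ℕ) : 0 < poch x n := by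
  induction n with
  | zero => simp [poch]
  | succ n ih =>
    rw [poch, ascPochhammer_succ_eval]
    exact mul_pos ih (by positivity)

lemma Gamma_poch {x : ℝ} (hx : 0 < x) (n : ℕ) :
    Real.Gamma (x + n) = Real.Gamma x * poch x n := by
  induction n with
  | zero => simp [poch]
  | succ n ih =>
    have : x + (n + 1 : ℕ) = (x + n) + 1 := by push_cast; ring
    rw [this, Real.Gamma_add_one (by positivity), ih]
    show _ = Real.Gamma x * (ascPochhammer ℝ (n+1)).eval x
    rw [ascPochhammer_succ_eval]; unfold poch; ring

lemma beta_intervalIntegrable {u v : ℝ} (hu : 0 < u) (hv : 0 < v) :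
    IntervalIntegrable (fun t : ℝ => t ^ (u - 1) * (1 - t) ^ (v - 1)) volume 0 1 := by
  have h := Complex.betaIntegral_convergent (u := u) (v := v) (by simpa) (by simpa)
  rw [IntervalIntegrable] at h ⊢
  constructor
  · refine (h.1.re).congr ?_
    filter_upwards [ae_restrict_mem measurableSet_Ioc] with x hx
    have h0 : (0:ℝ) ≤ x := le_of_lt hx.1
    have h1 : (0:ℝ) ≤ 1 - x := by linarith [hx.2]
    simp only [← Complex.ofReal_one, ← Complex.ofReal_sub]
    rw [← Complex.ofReal_cpow h0, ← Complex.ofReal_cpow h1, ← Complex.ofReal_mul]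
    simp
  · simp [integrableOn_Ioc_iff_integrableOn_Ioo]  -- Ioc 1 0 is empty

lemma beta_integral_eq {u v : ℝ} (hu : 0 < u) (hv : 0 < v) :
    ∫ t in (0:ℝ)..1, t ^ (u - 1) * (1 - t) ^ (v - 1) = betaFn u v := by
  have hc : Complex.betaIntegral u v
      = (((∫ t in (0:ℝ)..1, t ^ (u - 1) * (1 - t) ^ (v - 1)) : ℝ) : ℂ) := by
    rw [Complex.betaIntegral, ← intervalIntegral.integral_ofReal]
    apply intervalIntegral.integral_congr
    intro x hx
    rw [Set.uIcc_of_le zero_le_one] at hx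
    have h0 : (0:ℝ) ≤ x := hx.1
    have h1 : (0:ℝ) ≤ 1 - x := by linarith [hx.2]
    simp only [← Complex.ofReal_one, ← Complex.ofReal_sub]
    rw [← Complex.ofReal_cpow h0, ← Complex.ofReal_cpow h1, ← Complex.ofReal_mul]
  have hG := Complex.Gamma_mul_Gamma_eq_betaIntegral
      (s := u) (t := v) (by simpa) (by simpa)
  rw [hc, ← Complex.ofReal_add, Complex.Gamma_ofReal, Complex.Gamma_ofReal,
      Complex.Gamma_ofReal, ← Complex.ofReal_mul, ← Complex.ofReal_mul] at hG
  have h := Complex.ofReal_injective hG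
  have hne : Real.Gamma (u + v) ≠ 0 := (Real.Gamma_pos_of_pos (by linarith)).ne'
  rw [betaFn]
  field_simp
  linarith [h]

lemma rpow_mul_pow {x : ℝ} (hx : 0 ≤ x) {r : ℝ} (hr : -1 < r) (k : ℕ) :
    x ^ r * x ^ k = x ^ (r + k) := by
  rcases eq_or_lt_of_le hx with h | h
  · subst h
    cases k with
    | zero => simp
    | succ k =>
      rw [zero_pow (Nat.succ_ne_zero k), mul_zero,
        Real.zero_rpow (by have : (0:ℝ) ≤ (k:ℝ) := Nat.cast_nonneg k; push_cast; linarith : r + ((k+1:ℕ):ℝ) ≠ 0)]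
  · rw [← Real.rpow_natCast x k, ← Real.rpow_add h]

lemma betaFn_shift {α β : ℝ} (hα : -1 < α) (hβ : -1 < β) (k m : ℕ) :
    betaFn (β + 1 + k) (α + 1 + m)
      = betaFn (α + 1) (β + 1) * (poch (α + 1) m * poch (β + 1) k) / poch (α + β + 2) (k + m) := by
  unfold betaFn
  rw [Gamma_poch (by linarith : (0:ℝ) < β + 1) k, Gamma_poch (by linarith : (0:ℝ) < α + 1) m]
  have h5 : β + 1 + ↑k + (α + 1 + ↑m) = (α + β + 2) + ((k + m : ℕ) : ℝ) := by push_cast; ring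
  rw [h5, Gamma_poch (by linarith : (0:ℝ) < α + β + 2) (k + m)]
  have h6 : α + 1 + (β + 1) = α + β + 2 := by ring
  rw [h6]
  have h1 : Real.Gamma (α + β + 2) ≠ 0 := (Real.Gamma_pos_of_pos (by linarith)).ne'
  have h4 : poch (α + β + 2) (k + m) ≠ 0 := (poch_pos (by linarith) _).ne'
  field_simp

set_option maxHeartbeats 1000000 in
theorem stmt1 (α β : ℝ) (hα : -1 < α) (hβ : -1 < β) (N M : ℕ)
    (a : Fin (N + 1) → ℝ) (b : Fin (M + 1) → ℝ) :
    (∫ t in (0:ℝ)..1, (1 - t) ^ α * t ^ β *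
        ((∑ i : Fin (N + 1), a i * bern N i t) * (∑ j : Fin (M + 1), b j * bern M j t))) =
      Ifun α β N M a b := by
  set u : Fin (N+1) → Fin (M+1) → ℝ := fun i j => β + 1 + (((i:ℕ) + (j:ℕ) : ℕ) : ℝ) with hu
  set v : Fin (N+1) → Fin (M+1) → ℝ := fun i j => α + 1 + ((N + M - (i:ℕ) - (j:ℕ) : ℕ) : ℝ) with hv
  have hupos : ∀ i j, 0 < u i j := fun i j => by
    have : (0:ℝ) ≤ (((i:ℕ) + (j:ℕ) : ℕ) : ℝ) := Nat.cast_nonneg _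
    simp only [hu]; linarith
  have hvpos : ∀ i j, 0 < v i j := fun i j => by
    have : (0:ℝ) ≤ ((N + M - (i:ℕ) - (j:ℕ) : ℕ) : ℝ) := Nat.cast_nonneg _
    simp only [hv]; linarith
  have key : ∀ t ∈ Set.uIoc (0:ℝ) 1,
      (1 - t) ^ α * t ^ β *
        ((∑ i : Fin (N + 1), a i * bern N i t) * (∑ j : Fin (M + 1), b j * bern M j t))
      = ∑ p : Fin (N + 1) × Fin (M + 1),
          (a p.1 * b p.2 * (N.choose p.1 : ℝ) * (M.choose p.2 : ℝ)) *
            (t ^ (u p.1 p.2 - 1) * (1 - t) ^ (v p.1 p.2 - 1)) := by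
    intro t ht
    rw [Set.uIoc_of_le zero_le_one] at ht
    have ht0 : 0 < t := ht.1
    have ht1 : 0 ≤ 1 - t := by linarith [ht.2]
    rw [Fintype.sum_prod_type, Finset.sum_mul_sum, Finset.mul_sum]
    refine Finset.sum_congr rfl fun i _ => ?_
    rw [Finset.mul_sum]
    refine Finset.sum_congr rfl fun j _ => ?_
    have hij : N - (i:ℕ) + (M - (j:ℕ)) = N + M - (i:ℕ) - (j:ℕ) := by
      have := i.is_le; have := j.is_le; omega
    have e1 : t ^ (u i j - 1) = t ^ β * t ^ ((i:ℕ) + (j:ℕ)) := by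
      rw [rpow_mul_pow ht0.le hβ]
      congr 1
      simp only [hu]; push_cast; ring
    have e2 : (1 - t) ^ (v i j - 1) = (1 - t) ^ α * (1 - t) ^ (N - (i:ℕ) + (M - (j:ℕ))) := by
      rw [rpow_mul_pow ht1 hα, hij]
      congr 1
      simp only [hv]; ring
    rw [e1, e2, bern, bern, pow_add, pow_add]
    ring
  rw [intervalIntegral.integral_congr_ae (Filter.Eventually.of_forall key)]
  rw [intervalIntegral.integral_finset_sum (μ := volume) (a := (0:ℝ)) (b := (1:ℝ))
    (s := Finset.univ)
    (f := fun (p : Fin (N+1) × Fin (M+1)) (t : ℝ) =>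
      (a p.1 * b p.2 * (N.choose p.1 : ℝ) * (M.choose p.2 : ℝ)) *
        (t ^ (u p.1 p.2 - 1) * (1 - t) ^ (v p.1 p.2 - 1)))
    (fun p _ => (beta_intervalIntegrable (hupos p.1 p.2) (hvpos p.1 p.2)).const_mul _)]
  have hInt2 : ∀ p : Fin (N+1) × Fin (M+1),
      (∫ t in (0:ℝ)..1, (a p.1 * b p.2 * (N.choose p.1 : ℝ) * (M.choose p.2 : ℝ)) *
        (t ^ (u p.1 p.2 - 1) * (1 - t) ^ (v p.1 p.2 - 1)))
      = (a p.1 * b p.2 * (N.choose p.1 : ℝ) * (M.choose p.2 : ℝ)) *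
          betaFn (u p.1 p.2) (v p.1 p.2) := fun p => by
    rw [intervalIntegral.integral_const_mul, beta_integral_eq (hupos _ _) (hvpos _ _)]
  rw [Finset.sum_congr rfl fun p _ => hInt2 p]
  have hterm : ∀ (i : Fin (N+1)) (j : Fin (M+1)),
      betaFn (u i j) (v i j) = betaFn (α+1) (β+1) *
        (poch (α+1) (N + M - (i:ℕ) - (j:ℕ)) * poch (β+1) ((i:ℕ)+(j:ℕ))) /
          poch (α+β+2) (N+M) := by
    intro i j
    have hk : ((i:ℕ)+(j:ℕ)) + (N + M - (i:ℕ) - (j:ℕ)) = N + M := by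
      have := i.is_le; have := j.is_le; omega
    simp only [hu, hv]
    rw [betaFn_shift hα hβ ((i:ℕ)+(j:ℕ)) (N + M - (i:ℕ) - (j:ℕ)), hk]
  unfold Ifun
  rw [Fintype.sum_prod_type, Finset.mul_sum]
  refine Finset.sum_congr rfl fun i _ => ?_
  rw [Finset.mul_sum]
  refine Finset.sum_congr rfl fun j _ => ?_
  rw [hterm i j]
  have hpoch_ne : poch (α+β+2) (N+M) ≠ 0 := (poch_pos (by linarith) _).ne'
  field_simp
end

section
/- Let α, β > -1 be real numbers, let n > m > 0 be integers, let p_0,…,p_n ∈ ℝ^d and r_0,…,r_m ∈ ℝ^d, and set P_n(t) := Σ_{i=0}^{n} p_i B_i^n(t), R_m(t) := Σ_{i=0}^{m} r_i B_i^m(t). Then ∫₀¹ (1-t)^α t^β ‖P_n(t) - R_m(t)‖² dt = Σ_{h=1}^{d} { I_{nn}(p^h, p^h) + I_{mm}(r^h, r^h) - 2 I_{nm}(p^h, r^h) }, where p^h := [p_{0h},…,p_{nh}] and r^h := [r_{0h},…,r_{mh}] are the vectors of h-th coordinates, ‖·‖ is the Euclidean norm on ℝ^d, and I_{NM}(a,b)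 := (B(α+1,β+1)/(α+β+2)_{N+M}) · Σ_{i=0}^{N} Σ_{j=0}^{M} C(N,i) C(M,j) (α+1)_{N+M-i-j} (β+1)_{i+j} a_i b_j. -/
open MeasureTheory Polynomial

/-!
Since `B_i^N(t) B_j^M(t) = C(N,i) C(M,j) t^(i+j) (1-t)^(N+M-i-j)`, each product of Bernstein
polynomials integrates against the Jacobi weight `(1-t)^α t^β` to a beta value
`B(β+1+i+j, α+1+N+M-i-j)`, and `Γ(a+k) = (a)_k Γ(a)` rewrites it as `B(α+1, β+1)` times
Pochhammer symbols. The identity then follows by expanding `‖P_n - R_m‖²` coordinatewise and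
using bilinearity of the weighted integral.
-/

open Set

theorem betaFn_comm (x y : ℝ) : betaFn x y = betaFn y x := by
  rw [betaFn, betaFn, mul_comm, add_comm]

theorem integral_rpow_mul_one_sub_rpow {x y : ℝ} (hx : 0 < x) (hy : 0 < y) :
    ∫ t in (0:ℝ)..1, t ^ (x - 1) * (1 - t) ^ (y - 1) = betaFn x y := by
  have hcast : ((∫ t in (0:ℝ)..1, t ^ (x - 1) * (1 - t) ^ (y - 1) : ℝ) : ℂ) =
      Complex.betaIntegral x y := by
    rw [← intervalIntegral.integral_ofReal, Complex.betaIntegral]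
    refine intervalIntegral.integral_congr fun t ht => ?_
    rw [uIcc_of_le zero_le_one] at ht
    push_cast [Complex.ofReal_cpow ht.1, Complex.ofReal_cpow (sub_nonneg.2 ht.2)]
    rfl
  rw [betaFn, ← ProbabilityTheory.beta, ProbabilityTheory.beta_eq_betaIntegralReal x y hx hy,
    ← hcast, Complex.ofReal_re]

theorem intervalIntegrable_rpow_mul_one_sub_rpow {x y : ℝ} (hx : 0 < x) (hy : 0 < y) :
    IntervalIntegrable (fun t : ℝ => t ^ (x - 1) * (1 - t) ^ (y - 1)) volume 0 1 :=
  intervalIntegral.intervalIntegrable_of_integral_ne_zero <| by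
    rw [integral_rpow_mul_one_sub_rpow hx hy]
    exact (ProbabilityTheory.beta_pos hx hy).ne'

theorem Real.Gamma_add_nat_eq_poch_mul {a : ℝ} (ha : 0 < a) (k : ℕ) :
    Real.Gamma (a + k) = poch a k * Real.Gamma a := by
  induction k with
  | zero => simp [poch]
  | succ k ih =>
    rw [Nat.cast_succ, ← add_assoc, Real.Gamma_add_one (by positivity), ih, poch, poch,
      ascPochhammer_succ_right]
    simp only [eval_mul, eval_add, eval_X, eval_natCast]
    ring

theorem betaFn_add_nat {x y : ℝ} (hx : 0 < x) (hy : 0 < y) (k l : ℕ) :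
    betaFn (x + k) (y + l) = betaFn x y * poch x k * poch y l / poch (x + y) (k + l) := by
  have hxy : 0 < x + y := add_pos hx hy
  have hpoch : poch (x + y) (k + l) ≠ 0 := (ascPochhammer_pos _ _ hxy).ne'
  have hGamma : Real.Gamma (x + y) ≠ 0 := (Real.Gamma_pos_of_pos hxy).ne'
  rw [betaFn, betaFn, Real.Gamma_add_nat_eq_poch_mul hx, Real.Gamma_add_nat_eq_poch_mul hy,
    show x + k + (y + l) = x + y + ((k + l : ℕ) : ℝ) by push_cast; ring,
    Real.Gamma_add_nat_eq_poch_mul hxy]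
  field_simp

theorem bern_mul_bern {N M i j : ℕ} (hi : i ≤ N) (hj : j ≤ M) (t : ℝ) :
    bern N i t * bern M j t =
      (N.choose i : ℝ) * (M.choose j : ℝ) * (t ^ (i + j) * (1 - t) ^ (N + M - i - j)) := by
  rw [bern, bern, show N + M - i - j = (N - i) + (M - j) by omega, pow_add, pow_add]
  ring

@[fun_prop]
theorem continuous_bern (n i : ℕ) : Continuous (bern n i) := by
  unfold bern
  fun_prop

theorem continuous_sum_mul_bern (N : ℕ) (a : Fin (N + 1) → ℝ) :
    Continuous fun t => ∑ i : Fin (N + 1), a i * bern N i t :=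
  continuous_finsetSum _ fun i _ => continuous_const.mul (continuous_bern N i)

section JacobiWeight

variable {α β : ℝ}

theorem intervalIntegrable_weight_mul (hα : -1 < α) (hβ : -1 < β) {f : ℝ → ℝ}
    (hf : ContinuousOn f (uIcc 0 1)) :
    IntervalIntegrable (fun t => (1 - t) ^ α * t ^ β * f t) volume 0 1 := by
  refine IntervalIntegrable.mul_continuousOn ?_ hf
  simpa [mul_comm] using
    intervalIntegrable_rpow_mul_one_sub_rpow (x := β + 1) (y := α + 1) (by linarith) (by linarith)

theorem integral_weight_mul_pow_mul_pow (hα : -1 < α) (hβ : -1 < β) (k l : ℕ) :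
    ∫ t in (0:ℝ)..1, (1 - t) ^ α * t ^ β * (t ^ k * (1 - t) ^ l) =
      betaFn (α + 1) (β + 1) / poch (α + β + 2) (k + l) *
        (poch (α + 1) l * poch (β + 1) k) := by
  have hrpow : EqOn (fun t : ℝ => (1 - t) ^ α * t ^ β * (t ^ k * (1 - t) ^ l))
      (fun t => t ^ (β + 1 + k - 1) * (1 - t) ^ (α + 1 + l - 1)) (Ioo 0 1) := by
    intro t ht
    have h1t : 0 < 1 - t := sub_pos.2 ht.2
    dsimp only
    rw [show β + 1 + k - 1 = β + k by ring, show α + 1 + l - 1 = α + l by ring,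
      Real.rpow_add ht.1, Real.rpow_add h1t, Real.rpow_natCast, Real.rpow_natCast]
    ring
  rw [intervalIntegral.integral_congr_Ioo_of_le zero_le_one hrpow,
    integral_rpow_mul_one_sub_rpow (by linarith [k.cast_nonneg' (α := ℝ)])
      (by linarith [l.cast_nonneg' (α := ℝ)]), betaFn_add_nat (by linarith) (by linarith),
    betaFn_comm, show β + 1 + (α + 1) = α + β + 2 by ring]
  ring

theorem integral_weight_mul_bern_mul_bern (hα : -1 < α) (hβ : -1 < β) {N M i j : ℕ}
    (hi : i ≤ N) (hj : j ≤ M) :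
    ∫ t in (0:ℝ)..1, (1 - t) ^ α * t ^ β * (bern N i t * bern M j t) =
      betaFn (α + 1) (β + 1) / poch (α + β + 2) (N + M) *
        ((N.choose i : ℝ) * (M.choose j : ℝ) *
          poch (α + 1) (N + M - i - j) * poch (β + 1) (i + j)) := by
  simp_rw [bern_mul_bern hi hj, mul_left_comm _ ((N.choose i : ℝ) * _),
    intervalIntegral.integral_const_mul, integral_weight_mul_pow_mul_pow hα hβ,
    show i + j + (N + M - i - j) = N + M by omega]
  ring

theorem integral_weight_mul_sum (hα : -1 < α) (hβ : -1 < β) {ι : Type*} (s : Finset ι)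
    (c : ι → ℝ) {f : ι → ℝ → ℝ} (hf : ∀ i ∈ s, Continuous (f i)) :
    ∫ t in (0:ℝ)..1, (1 - t) ^ α * t ^ β * ∑ i ∈ s, c i * f i t =
      ∑ i ∈ s, c i * ∫ t in (0:ℝ)..1, (1 - t) ^ α * t ^ β * f i t := by
  simp_rw [Finset.mul_sum, mul_left_comm _ (c _)]
  rw [intervalIntegral.integral_finsetSum fun i hi =>
    (intervalIntegrable_weight_mul hα hβ (hf i hi).continuousOn).const_mul (c i)]
  simp_rw [intervalIntegral.integral_const_mul]

theorem integral_weight_mul_sum_bern_mul_sum_bern (hα : -1 < α) (hβ : -1 < β) (N M : ℕ)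
    (a : Fin (N + 1) → ℝ) (b : Fin (M + 1) → ℝ) :
    ∫ t in (0:ℝ)..1, (1 - t) ^ α * t ^ β *
      ((∑ i : Fin (N + 1), a i * bern N i t) * (∑ j : Fin (M + 1), b j * bern M j t)) =
      Ifun α β N M a b := by
  simp only [Finset.sum_mul, mul_assoc (a _)]
  rw [integral_weight_mul_sum hα hβ _ _ fun i _ => by fun_prop]
  have hinner : ∀ (i : Fin (N + 1)) t, bern N i t * ∑ j : Fin (M + 1), b j * bern M j t =
      ∑ j : Fin (M + 1), b j * (bern N i t * bern M j t) := fun i t => by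
    rw [Finset.mul_sum]
    exact Finset.sum_congr rfl fun j _ => mul_left_comm _ _ _
  simp only [hinner]
  rw [Ifun, Finset.mul_sum]
  refine Finset.sum_congr rfl fun i _ => ?_
  rw [integral_weight_mul_sum hα hβ _ _ fun j _ => by fun_prop, Finset.mul_sum, Finset.mul_sum]
  refine Finset.sum_congr rfl fun j _ => ?_
  rw [integral_weight_mul_bern_mul_bern hα hβ (Fin.is_le i) (Fin.is_le j)]
  ring

theorem integral_weight_mul_sub_sq (hα : -1 < α) (hβ : -1 < β) {f g : ℝ → ℝ}
    (hf : Continuous f) (hg : Continuous g) :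
    ∫ t in (0:ℝ)..1, (1 - t) ^ α * t ^ β * (f t - g t) ^ 2 =
      (∫ t in (0:ℝ)..1, (1 - t) ^ α * t ^ β * (f t * f t)) +
        (∫ t in (0:ℝ)..1, (1 - t) ^ α * t ^ β * (g t * g t)) -
        2 * ∫ t in (0:ℝ)..1, (1 - t) ^ α * t ^ β * (f t * g t) := by
  have hff := intervalIntegrable_weight_mul hα hβ (f := fun t => f t * f t) (by fun_prop)
  have hgg := intervalIntegrable_weight_mul hα hβ (f := fun t => g t * g t) (by fun_prop)
  have hfg := intervalIntegrable_weight_mul hα hβ (f := fun t => f t * g t) (by fun_prop)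
  rw [← intervalIntegral.integral_const_mul, ← intervalIntegral.integral_add hff hgg,
    ← intervalIntegral.integral_sub (hff.add hgg) (hfg.const_mul 2)]
  congr 1
  ext t
  ring

theorem integral_weight_mul_sub_sq_sum_bern (hα : -1 < α) (hβ : -1 < β) (N M : ℕ)
    (a : Fin (N + 1) → ℝ) (b : Fin (M + 1) → ℝ) :
    ∫ t in (0:ℝ)..1, (1 - t) ^ α * t ^ β *
      ((∑ i : Fin (N + 1), a i * bern N i t) - (∑ j : Fin (M + 1), b j * bern M j t)) ^ 2 =
      Ifun α β N N a a + Ifun α β M M b b - 2 * Ifun α β N M a b := by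
  rw [integral_weight_mul_sub_sq hα hβ (continuous_sum_mul_bern N a)
    (continuous_sum_mul_bern M b)]
  simp only [integral_weight_mul_sum_bern_mul_sum_bern hα hβ]

end JacobiWeight

theorem stmt2_general (α β : ℝ) (hα : -1 < α) (hβ : -1 < β) (d n m : ℕ)
    (p : Fin (n + 1) → EuclideanSpace ℝ (Fin d)) (r : Fin (m + 1) → EuclideanSpace ℝ (Fin d)) :
    (∫ t in (0:ℝ)..1, (1 - t) ^ α * t ^ β *
        ‖(∑ i : Fin (n + 1), bern n i t • p i) - (∑ i : Fin (m + 1), bern m i t • r i)‖ ^ 2) =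
      ∑ h : Fin d,
        (Ifun α β n n (fun i => p i h) (fun i => p i h) +
          Ifun α β m m (fun i => r i h) (fun i => r i h) -
          2 * Ifun α β n m (fun i => p i h) (fun i => r i h)) := by
  have hcoord : ∀ t,
      ‖(∑ i : Fin (n + 1), bern n i t • p i) - (∑ i : Fin (m + 1), bern m i t • r i)‖ ^ 2 =
        ∑ h : Fin d, ((∑ i : Fin (n + 1), p i h * bern n i t) -
          (∑ j : Fin (m + 1), r j h * bern m j t)) ^ 2 :=
    fun t => by simp [EuclideanSpace.norm_sq_eq, mul_comm]
  simp only [hcoord, Finset.mul_sum]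
  rw [intervalIntegral.integral_finsetSum]
  · exact Finset.sum_congr rfl fun h _ => integral_weight_mul_sub_sq_sum_bern hα hβ n m _ _
  · exact fun h _ => intervalIntegrable_weight_mul hα hβ (by fun_prop)

theorem stmt2 (α β : ℝ) (hα : -1 < α) (hβ : -1 < β) (d n m : ℕ) (hm : 0 < m) (hmn : m < n)
    (p : Fin (n + 1) → EuclideanSpace ℝ (Fin d)) (r : Fin (m + 1) → EuclideanSpace ℝ (Fin d)) :
    (∫ t in (0:ℝ)..1, (1 - t) ^ α * t ^ β *
        ‖(∑ i : Fin (n + 1), bern n i t • p i) - (∑ i : Fin (m + 1), bern m i t • r i)‖ ^ 2) =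
      ∑ h : Fin d,
        (Ifun α β n n (fun i => p i h) (fun i => p i h) +
          Ifun α β m m (fun i => r i h) (fun i => r i h) -
          2 * Ifun α β n m (fun i => p i h) (fun i => r i h)) :=
  stmt2_general α β hα hβ d n m p r
end

section
/- Let n ≥ m ≥ 0 be integers and let 0 ≤ i ≤ m. Then for all t, B_i^m(t) = C(m,i) · Σ_{h=0}^{n} C(n-m, h-i) C(n,h)^{-1} B_h^n(t), with the convention that C(u,v) = 0 whenever v < 0 or v > u. -/
open MeasureTheory Polynomial

/-- Binomial coefficient `C(u,v)` for an integer `v`, with the convention that it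
vanishes when `v < 0` or `v > u`. -/
noncomputable def chZ (u : ℕ) (v : ℤ) : ℝ := if 0 ≤ v then (u.choose v.toNat : ℝ) else 0

/-! Degree elevation: multiplying `t^i (1-t)^(m-i)` by `1 = (t + (1-t))^(n-m)` and expanding
gives `∑_j C(n-m,j) t^(i+j) (1-t)^(n-i-j)`; the shift `h = i + j` turns this into the sum over
`h` weighted by `C(n-m, h-i)`, whose convention `C(u,v) = 0` off `0 ≤ v ≤ u` cuts the range
back to `i ≤ h ≤ i + (n-m)`. -/

theorem chZ_natCast_sub (u h i : ℕ) :
    chZ u ((h : ℤ) - i) = if i ≤ h then (u.choose (h - i) : ℝ) else 0 := by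
  unfold chZ
  by_cases hih : i ≤ h
  · rw [if_pos hih, if_pos (by omega), show ((h : ℤ) - i).toNat = h - i by omega]
  · rw [if_neg hih, if_neg (by omega)]

theorem sum_chZ_sub_mul (u n i : ℕ) (hin : i + u ≤ n) (f : ℕ → ℝ) :
    ∑ h ∈ Finset.range (n + 1), chZ u ((h : ℤ) - i) * f h =
      ∑ j ∈ Finset.range (u + 1), (u.choose j : ℝ) * f (i + j) := by
  have hshift : ∑ h ∈ Finset.range (n + 1), chZ u ((h : ℤ) - i) * f h =
      ∑ j ∈ Finset.range (n + 1 - i), (u.choose j : ℝ) * f (i + j) := by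
    simp only [chZ_natCast_sub, ite_mul, zero_mul, Finset.sum_ite, Finset.sum_const_zero,
      add_zero, Finset.range_eq_Ico, Finset.Ico_filter_le, max_eq_right (Nat.zero_le i)]
    rw [Finset.sum_Ico_eq_sum_range, ← Finset.range_eq_Ico]
    exact Finset.sum_congr rfl fun j _ => by rw [Nat.add_sub_cancel_left]
  rw [hshift]
  refine (Finset.sum_subset (Finset.range_subset_range.2 (by omega)) fun j _ hj => ?_).symm
  rw [Finset.mem_range, not_lt] at hj
  rw [Nat.choose_eq_zero_of_lt hj, Nat.cast_zero, zero_mul]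

theorem pow_mul_pow_eq_sum_choose {R : Type*} [CommSemiring R] {a b : R} (hab : a + b = 1)
    (i k u : ℕ) :
    a ^ i * b ^ k =
      ∑ j ∈ Finset.range (u + 1), (u.choose j : R) * (a ^ (i + j) * b ^ (k + u - j)) := by
  calc a ^ i * b ^ k = a ^ i * b ^ k * (a + b) ^ u := by rw [hab, one_pow, mul_one]
    _ = _ := by
      rw [add_pow, Finset.mul_sum]
      refine Finset.sum_congr rfl fun j hj => ?_
      rw [Nat.add_sub_assoc (Nat.lt_succ_iff.1 (Finset.mem_range.1 hj)), pow_add, pow_add]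
      ring

theorem inv_choose_mul_bern {n h : ℕ} (hh : h ≤ n) (t : ℝ) :
    ((n.choose h : ℝ))⁻¹ * bern n h t = t ^ h * (1 - t) ^ (n - h) := by
  have hc : (n.choose h : ℝ) ≠ 0 := Nat.cast_ne_zero.2 (Nat.choose_pos hh).ne'
  rw [bern, mul_assoc, inv_mul_cancel_left₀ hc]

theorem stmt3 (n m i : ℕ) (hmn : m ≤ n) (hi : i ≤ m) (t : ℝ) :
    bern m i t =
      (m.choose i : ℝ) *
        ∑ h ∈ Finset.range (n + 1),
          chZ (n - m) ((h : ℤ) - (i : ℤ)) * ((n.choose h : ℝ))⁻¹ * bern n h t := by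
  have hterm : ∀ h ∈ Finset.range (n + 1),
      chZ (n - m) ((h : ℤ) - (i : ℤ)) * ((n.choose h : ℝ))⁻¹ * bern n h t =
        chZ (n - m) ((h : ℤ) - (i : ℤ)) * (t ^ h * (1 - t) ^ (n - h)) := fun h hh => by
    rw [mul_assoc, inv_choose_mul_bern (Nat.lt_succ_iff.1 (Finset.mem_range.1 hh))]
  rw [Finset.sum_congr rfl hterm, sum_chZ_sub_mul (n - m) n i (by omega), bern, mul_assoc,
    pow_mul_pow_eq_sum_choose (add_sub_cancel t 1) i (m - i) (n - m)]
  congr 1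
  refine Finset.sum_congr rfl fun j _ => ?_
  congr 3
  omega
end

section
/- Let n be a nonnegative integer and let k, l be integers with k, l ≥ -1 and k + l < n - 1. A real polynomial p of degree at most n satisfies p^{(i)}(0) = 0 for i = 0,1,…,k and p^{(j)}(1) = 0 for j = 0,1,…,l if and only if p lies in the linear span of the Bernstein polynomials {B_{k+1}^n, B_{k+2}^n, …, B_{n-l-1}^n}. -/
open Polynomial

/-!
With `a = k + 1` and `b = l + 1`, vanishing of the derivatives of orders `< a` at `0` and `< b`
at `1` means exactly that `X ^ a * (1 - X) ^ b` divides `p`. Write `p = X ^ a * (1 - X) ^ b * q`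
with `deg q ≤ m := n - a - b`. Multiplying each monomial `X ^ j` of `q` by
`(X + (1 - X)) ^ (m - j) = 1` and expanding writes `q` as a combination of the
`X ^ j * (1 - X) ^ (m - j)`, hence `p` as a combination of the `X ^ i * (1 - X) ^ (n - i)`,
`a ≤ i ≤ n - b`, which are multiples of the Bernstein polynomials `B_i^n`. Conversely each such
`B_i^n` is divisible by `X ^ a * (1 - X) ^ b`.
-/

namespace Polynomial

theorem pow_X_sub_C_dvd_iff_iterate_derivative_eval_eq_zero {R : Type*} [CommRing R]
    [NoZeroDivisors R] [CharZero R] {p : R[X]} {t : R} {a : ℕ} :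
    (X - C t) ^ a ∣ p ↔ ∀ i < a, (derivative^[i] p).eval t = 0 := by
  rcases eq_or_ne p 0 with rfl | hp
  · simp [iterate_map_zero]
  cases a with
  | zero => simp
  | succ a =>
    rw [← le_rootMultiplicity_iff hp, Nat.add_one_le_iff,
      lt_rootMultiplicity_iff_isRoot_iterate_derivative hp]
    simp only [IsRoot.def, Nat.lt_add_one_iff]

theorem mem_span_X_pow_mul_one_sub_X_pow {R : Type*} [CommRing R] {m : ℕ} {p : R[X]}
    (hp : p.natDegree ≤ m) :
    p ∈ Submodule.span R ((fun i => X ^ i * (1 - X) ^ (m - i)) '' Set.Iic m) := by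
  set S := Submodule.span R ((fun i => (X : R[X]) ^ i * (1 - X) ^ (m - i)) '' Set.Iic m)
  have hX : ∀ i ≤ m, (X : R[X]) ^ i ∈ S := by
    intro i hi
    have hexp : (X : R[X]) ^ i = ∑ j ∈ Finset.range (m - i + 1),
        (m - i).choose j • (X ^ (i + j) * (1 - X) ^ (m - (i + j))) := by
      calc (X : R[X]) ^ i = X ^ i * (X + (1 - X)) ^ (m - i) := by simp
        _ = _ := by
          rw [add_pow, Finset.mul_sum]
          refine Finset.sum_congr rfl fun j _ => ?_
          rw [nsmul_eq_mul, pow_add, Nat.sub_sub]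
          ring
    rw [hexp]
    refine Submodule.sum_mem _ fun j hj => nsmul_mem (Submodule.subset_span ?_) _
    exact ⟨i + j, Set.mem_Iic.mpr (by grind), rfl⟩
  rw [p.as_sum_range' (m + 1) (by omega)]
  refine Submodule.sum_mem _ fun i hi => ?_
  rw [← smul_X_eq_monomial]
  exact S.smul_mem _ (hX i (Nat.lt_succ_iff.mp (Finset.mem_range.mp hi)))

theorem X_pow_dvd_and_one_sub_X_pow_dvd_iff {R : Type*} [CommRing R] {a b : ℕ} {p : R[X]} :
    X ^ a ∣ p ∧ (1 - X) ^ b ∣ p ↔ X ^ a * (1 - X) ^ b ∣ p :=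
  have hcop : IsCoprime (X : R[X]) (1 - X) := ⟨1, 1, by ring⟩
  ⟨fun h => hcop.pow.mul_dvd h.1 h.2, fun h => ⟨dvd_of_mul_right_dvd h, dvd_of_mul_left_dvd h⟩⟩

end Polynomial

namespace bernsteinPolynomial

variable {K : Type*} [Field K] [CharZero K]

theorem X_pow_mul_one_sub_X_pow_eq_smul {n ν : ℕ} (h : ν ≤ n) :
    (X : K[X]) ^ ν * (1 - X) ^ (n - ν) = (n.choose ν : K)⁻¹ • bernsteinPolynomial K n ν := by
  have hchoose : (n.choose ν : K) ≠ 0 := by exact_mod_cast (Nat.choose_pos h).ne'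
  rw [bernsteinPolynomial, mul_assoc, ← map_natCast C, ← smul_eq_C_mul, smul_smul,
    inv_mul_cancel₀ hchoose, one_smul]

theorem mem_span_image_Icc_iff_dvd {a b n : ℕ} (hab : a + b ≤ n) {p : K[X]}
    (hp : p.natDegree ≤ n) :
    p ∈ Submodule.span K (bernsteinPolynomial K n '' Set.Icc a (n - b)) ↔
      X ^ a * (1 - X) ^ b ∣ p := by
  set d : K[X] := X ^ a * (1 - X) ^ b
  constructor
  · intro hmem
    suffices Submodule.span K (bernsteinPolynomial K n '' Set.Icc a (n - b)) ≤
        (Ideal.span {d}).restrictScalars K from Ideal.mem_span_singleton.mp (this hmem)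
    rw [Submodule.span_le]
    rintro _ ⟨i, hi, rfl⟩
    rw [SetLike.mem_coe, Submodule.restrictScalars_mem, Ideal.mem_span_singleton,
      bernsteinPolynomial, mul_assoc]
    exact dvd_mul_of_dvd_right
      (mul_dvd_mul (pow_dvd_pow _ hi.1) (pow_dvd_pow _ (by grind))) _
  · rintro ⟨q, rfl⟩
    rcases eq_or_ne q 0 with rfl | hq
    · simp
    have hdeg1 : (1 - X : K[X]).natDegree = 1 := by compute_degree!
    have h1X : (1 - X : K[X]) ≠ 0 := ne_zero_of_natDegree_gt (hdeg1 ▸ zero_lt_one)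
    have hd0 : d ≠ 0 := mul_ne_zero (pow_ne_zero _ X_ne_zero) (pow_ne_zero _ h1X)
    have hqdeg : q.natDegree ≤ n - (a + b) := by
      rw [natDegree_mul hd0 hq, natDegree_mul (pow_ne_zero _ X_ne_zero) (pow_ne_zero _ h1X),
        natDegree_X_pow, natDegree_pow, hdeg1] at hp
      omega
    have hmap := Submodule.mem_map_of_mem (f := LinearMap.mulLeft K d)
      (mem_span_X_pow_mul_one_sub_X_pow hqdeg)
    rw [Submodule.map_span, Set.image_image] at hmap
    refine Submodule.span_le.mpr ?_ hmap
    rintro _ ⟨j, hj, rfl⟩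
    rw [Set.mem_Iic] at hj
    have hprod : d * (X ^ j * (1 - X) ^ (n - (a + b) - j)) =
        X ^ (a + j) * (1 - X) ^ (n - (a + j)) := by
      rw [show n - (a + j) = b + (n - (a + b) - j) by omega]
      ring
    simp only [SetLike.mem_coe, LinearMap.mulLeft_apply]
    rw [hprod, X_pow_mul_one_sub_X_pow_eq_smul (by omega)]
    exact Submodule.smul_mem _ _ (Submodule.subset_span ⟨a + j, ⟨by omega, by omega⟩, rfl⟩)

end bernsteinPolynomial

theorem stmt5 (n : ℕ) (k l : ℤ) (hk : -1 ≤ k) (hl : -1 ≤ l) (hkl : k + l < (n : ℤ) - 1)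
    (p : Polynomial ℝ) (hp : p.degree ≤ n) :
    ((∀ i : ℕ, (i : ℤ) ≤ k → (Polynomial.derivative^[i] p).eval 0 = 0) ∧
        (∀ j : ℕ, (j : ℤ) ≤ l → (Polynomial.derivative^[j] p).eval 1 = 0)) ↔
      p ∈ Submodule.span ℝ
          {q : Polynomial ℝ | ∃ i : ℕ,
            (k + 1 ≤ (i : ℤ) ∧ (i : ℤ) ≤ (n : ℤ) - l - 1) ∧ q = bernsteinPolynomial ℝ n i} := by
  obtain ⟨a, rfl⟩ : ∃ a : ℕ, (a : ℤ) - 1 = k := ⟨(k + 1).toNat, by omega⟩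
  obtain ⟨b, rfl⟩ : ∃ b : ℕ, (b : ℤ) - 1 = l := ⟨(l + 1).toNat, by omega⟩
  have hzero : (∀ i : ℕ, (i : ℤ) ≤ a - 1 → (derivative^[i] p).eval 0 = 0) ↔ X ^ a ∣ p := by
    rw [← sub_zero X, ← C_0, pow_X_sub_C_dvd_iff_iterate_derivative_eval_eq_zero]
    exact forall_congr' fun i => imp_congr_left (by omega)
  have hone : (∀ j : ℕ, (j : ℤ) ≤ b - 1 → (derivative^[j] p).eval 1 = 0) ↔ (1 - X) ^ b ∣ p := by
    rw [← neg_sub X 1, neg_pow, (isUnit_one.neg.pow b).mul_left_dvd, ← C_1,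
      pow_X_sub_C_dvd_iff_iterate_derivative_eval_eq_zero]
    exact forall_congr' fun j => imp_congr_left (by omega)
  have hgens : {q : ℝ[X] | ∃ i : ℕ, ((a : ℤ) - 1 + 1 ≤ i ∧ (i : ℤ) ≤ n - (b - 1) - 1) ∧
      q = bernsteinPolynomial ℝ n i} = bernsteinPolynomial ℝ n '' Set.Icc a (n - b) := by
    ext q
    simp only [Set.mem_ofPred_eq, Set.mem_image, Set.mem_Icc]
    refine exists_congr fun i => ?_
    constructor <;> rintro ⟨h, rfl⟩ <;> exact ⟨by omega, rfl⟩
  rw [hzero, hone, hgens, X_pow_dvd_and_one_sub_X_pow_dvd_iff,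
    bernsteinPolynomial.mem_span_image_Icc_iff_dvd (by omega) (natDegree_le_iff_degree_le.mpr hp)]
end

section
/- Let α, β > -1 be real numbers, let n ≥ m be nonnegative integers, and let k, l be integers with k, l ≥ -1 and k + l < m - 1. Let D_{k+1},…,D_{m-l-1} be polynomials in Π_m^{(k,l)} with ⟨D_i, B_j^m⟩_{α,β} = δ_{ij} for k+1 ≤ i, j ≤ m-l-1. Then for every real polynomial W of degree at most n, the polynomial S(t) := Σ_{i=k+1}^{m-l-1} ⟨W, D_i⟩_{α,β} B_i^m(t) is the unique minimizer of ∫₀¹ (1-t)^α t^β (W(t) - Q(t))² dt over all Q ∈ Π_m^{(k,l)}. -/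
open MeasureTheory Polynomial

/-- The inner product `⟨f,g⟩_{α,β} = ∫₀¹ (1-t)^α t^β f(t) g(t) dt`. -/
noncomputable def jacobiInner (α β : ℝ) (f g : Polynomial ℝ) : ℝ :=
  ∫ t in (0:ℝ)..1, (1 - t) ^ α * t ^ β * (f.eval t * g.eval t)

/-- The linear functional `p ↦ (d^i/dt^i p)(x)` on real polynomials. -/
noncomputable def evalDeriv (x : ℝ) (i : ℕ) : Polynomial ℝ →ₗ[ℝ] ℝ :=
  (Polynomial.leval x).comp
    (((Polynomial.derivative : Module.End ℝ (Polynomial ℝ)) ^ i : Module.End ℝ (Polynomial ℝ)))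

/-- The space `Π_m^{(k,l)}` of real polynomials of degree at most `m` whose derivatives of
orders `0,1,…,k` at `t = 0` and of orders `0,1,…,l` at `t = 1` vanish. -/
noncomputable def PiSpace (m : ℕ) (k l : ℤ) : Submodule ℝ (Polynomial ℝ) :=
  Polynomial.degreeLE ℝ (m : ℕ) ⊓
    (⨅ i ∈ {i : ℕ | (i : ℤ) ≤ k}, LinearMap.ker (evalDeriv 0 i)) ⊓
    (⨅ j ∈ {j : ℕ | (j : ℤ) ≤ l}, LinearMap.ker (evalDeriv 1 j))

namespace Stmt9Aux

variable {α β : ℝ}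

lemma weight_ii (hα : -1 < α) (hβ : -1 < β) :
    IntervalIntegrable (fun t : ℝ => (1 - t) ^ α * t ^ β) volume 0 1 := by
  have h1 : IntervalIntegrable (fun t : ℝ => (1 - t) ^ α * t ^ β) volume 0 (1/2) := by
    have hb : IntervalIntegrable (fun t : ℝ => t ^ β) volume 0 (1/2) :=
      intervalIntegral.intervalIntegrable_rpow' hβ
    have hc : ContinuousOn (fun t : ℝ => (1 - t) ^ α) (Set.uIcc 0 (1/2 : ℝ)) := by
      apply ContinuousOn.rpow_const (by fun_prop)
      intro x hx
      rw [Set.uIcc_of_le (by norm_num)] at hx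
      left; have := hx.2; intro h; nlinarith [hx.1]
    exact hb.continuousOn_mul hc
  have h2 : IntervalIntegrable (fun t : ℝ => (1 - t) ^ α * t ^ β) volume (1/2) 1 := by
    have ha : IntervalIntegrable (fun t : ℝ => t ^ α) volume 0 (1/2) :=
      intervalIntegral.intervalIntegrable_rpow' hα
    have ha' := (ha.comp_sub_left 1).symm
    norm_num at ha'
    have hc : ContinuousOn (fun t : ℝ => t ^ β) (Set.uIcc (1/2 : ℝ) 1) := by
      apply ContinuousOn.rpow_const (by fun_prop)
      intro x hx
      rw [Set.uIcc_of_le (by norm_num)] at hx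
      left; have := hx.1; intro h; nlinarith
    exact ha'.mul_continuousOn hc
  exact h1.trans h2

lemma intble (hα : -1 < α) (hβ : -1 < β) {f : ℝ → ℝ} (hf : Continuous f) :
    IntervalIntegrable (fun t : ℝ => (1 - t) ^ α * t ^ β * f t) volume 0 1 :=
  (weight_ii hα hβ).mul_continuousOn hf.continuousOn

lemma jacobi_intble (hα : -1 < α) (hβ : -1 < β) (p q : Polynomial ℝ) :
    IntervalIntegrable (fun t : ℝ => (1 - t) ^ α * t ^ β * (p.eval t * q.eval t)) volume 0 1 :=
  intble hα hβ (p.continuous.mul q.continuous)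

lemma jacobi_symm (p q : Polynomial ℝ) : jacobiInner α β p q = jacobiInner α β q p := by
  simp only [jacobiInner, mul_comm]

lemma jacobi_add_right (hα : -1 < α) (hβ : -1 < β) (p q r : Polynomial ℝ) :
    jacobiInner α β p (q + r) = jacobiInner α β p q + jacobiInner α β p r := by
  unfold jacobiInner
  rw [← intervalIntegral.integral_add (jacobi_intble hα hβ p q) (jacobi_intble hα hβ p r)]
  apply intervalIntegral.integral_congr
  intro t _; simp only [eval_add]; ring

lemma jacobi_sub_right (hα : -1 < α) (hβ : -1 < β) (p q r : Polynomial ℝ) :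
    jacobiInner α β p (q - r) = jacobiInner α β p q - jacobiInner α β p r := by
  unfold jacobiInner
  rw [← intervalIntegral.integral_sub (jacobi_intble hα hβ p q) (jacobi_intble hα hβ p r)]
  apply intervalIntegral.integral_congr
  intro t _; simp only [eval_sub]; ring

lemma jacobi_smul_right (p q : Polynomial ℝ) (c : ℝ) :
    jacobiInner α β p (c • q) = c * jacobiInner α β p q := by
  unfold jacobiInner
  rw [← intervalIntegral.integral_const_mul]
  apply intervalIntegral.integral_congr
  intro t _; simp only [eval_smul, smul_eq_mul]; ring

lemma jacobi_zero_right (p : Polynomial ℝ) : jacobiInner α β p 0 = 0 := by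
  simp [jacobiInner]

lemma jacobi_sum_right (hα : -1 < α) (hβ : -1 < β) (p : Polynomial ℝ) {σ : Type*}
    (s : Finset σ) (g : σ → Polynomial ℝ) :
    jacobiInner α β p (∑ i ∈ s, g i) = ∑ i ∈ s, jacobiInner α β p (g i) := by
  induction s using Finset.cons_induction with
  | empty => simp [jacobi_zero_right]
  | cons a s ha ih => rw [Finset.sum_cons, jacobi_add_right hα hβ, ih, Finset.sum_cons]

lemma evalDeriv_apply (x : ℝ) (i : ℕ) (p : Polynomial ℝ) :
    evalDeriv x i p = (Polynomial.derivative^[i] p).eval x := by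
  simp [evalDeriv, Module.End.pow_apply]

lemma mem_PiSpace_iff {m : ℕ} {k l : ℤ} {p : Polynomial ℝ} :
    p ∈ PiSpace m k l ↔ p.degree ≤ (m : ℕ) ∧
      (∀ i : ℕ, (i : ℤ) ≤ k → (Polynomial.derivative^[i] p).eval 0 = 0) ∧
      (∀ j : ℕ, (j : ℤ) ≤ l → (Polynomial.derivative^[j] p).eval 1 = 0) := by
  simp [PiSpace, Submodule.mem_inf, Submodule.mem_iInf, Polynomial.mem_degreeLE,
    LinearMap.mem_ker, evalDeriv_apply, Set.mem_setOf_eq, and_assoc]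

lemma bern_degree_le (m i : ℕ) : (bernsteinPolynomial ℝ m i).degree ≤ (m : ℕ) := by
  by_cases h : i ≤ m
  · refine le_trans degree_le_natDegree ?_
    have h1 : (bernsteinPolynomial ℝ m i).natDegree ≤ m := by
      rw [bernsteinPolynomial]
      refine le_trans (natDegree_mul_le) ?_
      have h2 : ((1 - X : Polynomial ℝ) ^ (m - i)).natDegree ≤ m - i := by
        refine le_trans natDegree_pow_le ?_
        have : (1 - X : Polynomial ℝ).natDegree ≤ 1 := by
          have : (1 - X : Polynomial ℝ) = -(X - Polynomial.C 1) := by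
            simp [neg_sub]
          rw [this, natDegree_neg, natDegree_X_sub_C]
        nlinarith [this]
      have h3 : ((m.choose i : Polynomial ℝ) * X ^ i).natDegree ≤ i := by
        refine le_trans natDegree_mul_le ?_
        simp
      omega
    exact_mod_cast h1
  · rw [bernsteinPolynomial.eq_zero_of_lt ℝ (by omega)]
    simp

lemma bern_mem_PiSpace {m : ℕ} {k l : ℤ} (i : ℕ) (h1 : k + 1 ≤ (i : ℤ))
    (h2 : (i : ℤ) ≤ (m : ℤ) - l - 1) : bernsteinPolynomial ℝ m i ∈ PiSpace m k l := by
  rw [mem_PiSpace_iff]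
  refine ⟨bern_degree_le m i, fun j hj => ?_, fun j hj => ?_⟩
  · exact bernsteinPolynomial.iterate_derivative_at_0_eq_zero_of_lt ℝ m (by omega)
  · exact bernsteinPolynomial.iterate_derivative_at_1_eq_zero_of_lt ℝ m (by omega)

lemma inv_smul_bern {M A : ℕ} (h : A ≤ M) :
    ((M.choose A : ℝ))⁻¹ • bernsteinPolynomial ℝ M A = X ^ A * (1 - X) ^ (M - A) := by
  rw [bernsteinPolynomial, smul_eq_C_mul, ← C_eq_natCast, ← mul_assoc, ← mul_assoc, ← C_mul,
    inv_mul_cancel₀ (by exact_mod_cast (Nat.choose_pos h).ne'), C_1, one_mul]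

lemma rep_monomial (m k' l' : ℕ) (h : k' + l' ≤ m) (j : ℕ) (hj : j ≤ m - k' - l') :
    ∃ c : ℕ → ℝ, X ^ k' * (X - Polynomial.C 1) ^ l' * X ^ j
      = ∑ a ∈ Finset.Icc k' (m - l'), c a • bernsteinPolynomial ℝ m a := by
  obtain ⟨d, hm⟩ : ∃ d, m = k' + l' + d := ⟨m - k' - l', by omega⟩
  obtain ⟨e, he⟩ : ∃ e, j + e = m - k' - l' := ⟨m - k' - l' - j, by omega⟩
  refine ⟨fun a => if k' + j ≤ a then
      (-1 : ℝ) ^ l' * (e.choose (a - (k' + j))) * ((m.choose a : ℝ))⁻¹ else 0, ?_⟩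
  have hsub : Finset.Icc (k' + j) (m - l') ⊆ Finset.Icc k' (m - l') :=
    Finset.Icc_subset_Icc_left (by omega)
  rw [← Finset.sum_subset hsub (fun a ha hna => ?_)]
  swap
  · simp only [Finset.mem_Icc] at ha hna
    have hneg : ¬ (k' + j ≤ a) := by omega
    simp only [hneg, if_false, zero_smul]
  have hIcc : Finset.Icc (k' + j) (m - l') = Finset.Ico (k' + j) (m - l' + 1) := by
    rw [Finset.Ico_add_one_right_eq_Icc]
  rw [hIcc, Finset.sum_Ico_eq_sum_range]
  have hlen : m - l' + 1 - (k' + j) = e + 1 := by omega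
  rw [hlen]
  have hone : (1 : Polynomial ℝ)
      = ∑ b ∈ Finset.range (e + 1), X ^ b * (1 - X) ^ (e - b) * (e.choose b : Polynomial ℝ) := by
    have h1 := add_pow (X : Polynomial ℝ) (1 - X) e
    rw [show (X + (1 - X) : Polynomial ℝ) = 1 by ring, one_pow] at h1
    exact h1
  calc X ^ k' * (X - Polynomial.C 1) ^ l' * X ^ j
      = (X ^ k' * (X - Polynomial.C 1) ^ l' * X ^ j) * 1 := by rw [mul_one]
    _ = ∑ b ∈ Finset.range (e + 1), (X ^ k' * (X - Polynomial.C 1) ^ l' * X ^ j)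
          * (X ^ b * (1 - X) ^ (e - b) * (e.choose b : Polynomial ℝ)) := by
        conv_lhs => rw [hone]
        rw [Finset.mul_sum]
    _ = _ := by
        refine Finset.sum_congr rfl fun b hb => ?_
        simp only [Finset.mem_range] at hb
        obtain ⟨r, hr⟩ : ∃ r, e = b + r := ⟨e - b, by omega⟩
        have hif : k' + j ≤ k' + j + b := by omega
        have hab : k' + j + b - (k' + j) = b := by omega
        simp only [hif, if_true, hab]
        have hAM : k' + j + b ≤ m := by omega
        rw [mul_smul ((-1 : ℝ) ^ l' * (e.choose b : ℝ)) _, inv_smul_bern hAM]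
        have hMA : m - (k' + j + b) = l' + r := by omega
        have heb : e - b = r := by omega
        rw [hMA, heb, smul_eq_C_mul, map_mul, map_pow, map_neg, C_1, C_eq_natCast]
        rw [show (X - 1 : Polynomial ℝ) = -(1 - X) by ring, neg_pow]
        ring

lemma rep_of_conditions (m k' l' : ℕ) (h : k' + l' ≤ m) (p : Polynomial ℝ)
    (hdeg : p.degree ≤ (m : ℕ))
    (h0 : ∀ i < k', (Polynomial.derivative^[i] p).eval 0 = 0)
    (h1 : ∀ j < l', (Polynomial.derivative^[j] p).eval 1 = 0) :
    ∃ c : ℕ → ℝ, p = ∑ a ∈ Finset.Icc k' (m - l'), c a • bernsteinPolynomial ℝ m a := by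
  rcases eq_or_ne p 0 with rfl | hp
  · exact ⟨0, by simp⟩
  have hdvd0 : (X : Polynomial ℝ) ^ k' ∣ p := by
    rcases Nat.eq_zero_or_pos k' with rfl | hk'
    · simp
    · have hlt : k' - 1 < p.rootMultiplicity 0 := by
        apply Polynomial.lt_rootMultiplicity_of_isRoot_iterate_derivative_of_mem_nonZeroDivisors'
          hp
        · intro i hi; exact h0 i (by omega)
        · intro i _ hi; exact mem_nonZeroDivisors_of_ne_zero (Nat.cast_ne_zero.mpr hi)
      have h2 : (X - Polynomial.C (0 : ℝ)) ^ k' ∣ p :=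
        dvd_trans (pow_dvd_pow _ (by omega)) (p.pow_rootMultiplicity_dvd 0)
      simpa using h2
  have hdvd1 : (X - Polynomial.C (1 : ℝ)) ^ l' ∣ p := by
    rcases Nat.eq_zero_or_pos l' with rfl | hl'
    · simp
    · have hlt : l' - 1 < p.rootMultiplicity 1 := by
        apply Polynomial.lt_rootMultiplicity_of_isRoot_iterate_derivative_of_mem_nonZeroDivisors'
          hp
        · intro i hi; exact h1 i (by omega)
        · intro i _ hi; exact mem_nonZeroDivisors_of_ne_zero (Nat.cast_ne_zero.mpr hi)
      exact dvd_trans (pow_dvd_pow _ (by omega)) (p.pow_rootMultiplicity_dvd 1)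
  have hcop : IsCoprime ((X : Polynomial ℝ) ^ k') ((X - Polynomial.C 1) ^ l') := by
    apply IsCoprime.pow
    exact ⟨1, -1, by rw [C_1]; ring⟩
  obtain ⟨q, hq⟩ := hcop.mul_dvd hdvd0 hdvd1
  have hq0 : q ≠ 0 := by
    rintro rfl
    rw [mul_zero] at hq
    exact hp hq
  have hdq : q.natDegree ≤ m - k' - l' := by
    have hnd : p.natDegree = k' + l' + q.natDegree := by
      rw [hq, natDegree_mul (mul_ne_zero (pow_ne_zero _ X_ne_zero)
          (pow_ne_zero _ (X_sub_C_ne_zero 1))) hq0,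
        natDegree_mul (pow_ne_zero _ X_ne_zero) (pow_ne_zero _ (X_sub_C_ne_zero 1)),
        natDegree_pow, natDegree_pow, natDegree_X, natDegree_X_sub_C]
      ring
    have h2 : p.natDegree ≤ m := natDegree_le_iff_degree_le.mpr hdeg
    omega
  have hqsum := q.as_sum_range' (m - k' - l' + 1) (by omega)
  classical
  set cj : ℕ → ℕ → ℝ := fun j =>
    if hj : j ≤ m - k' - l' then (rep_monomial m k' l' h j hj).choose else 0 with hcj
  refine ⟨fun a => ∑ j ∈ Finset.range (m - k' - l' + 1), q.coeff j * cj j a, ?_⟩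
  calc p = (X ^ k' * (X - Polynomial.C 1) ^ l') * q := hq
    _ = ∑ j ∈ Finset.range (m - k' - l' + 1),
          (X ^ k' * (X - Polynomial.C 1) ^ l') * (monomial j (q.coeff j)) := by
        conv_lhs => rw [hqsum]
        rw [Finset.mul_sum]
    _ = ∑ j ∈ Finset.range (m - k' - l' + 1),
          q.coeff j • (X ^ k' * (X - Polynomial.C 1) ^ l' * X ^ j) := by
        refine Finset.sum_congr rfl fun j _ => ?_
        rw [← smul_X_eq_monomial, mul_smul_comm, mul_assoc]
    _ = ∑ j ∈ Finset.range (m - k' - l' + 1),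
          q.coeff j • (∑ a ∈ Finset.Icc k' (m - l'), cj j a • bernsteinPolynomial ℝ m a) := by
        refine Finset.sum_congr rfl fun j hj => ?_
        have hjd : j ≤ m - k' - l' := by
          simp only [Finset.mem_range] at hj; omega
        rw [hcj]
        simp only [hjd, dif_pos]
        rw [← (rep_monomial m k' l' h j hjd).choose_spec]
    _ = ∑ a ∈ Finset.Icc k' (m - l'),
          (∑ j ∈ Finset.range (m - k' - l' + 1), q.coeff j * cj j a) •
            bernsteinPolynomial ℝ m a := by
        simp_rw [Finset.smul_sum, smul_smul]
        rw [Finset.sum_comm]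
        refine Finset.sum_congr rfl fun a _ => ?_
        rw [Finset.sum_smul]

lemma pos_integral (hα : -1 < α) (hβ : -1 < β) (R : Polynomial ℝ) (hR : R ≠ 0) :
    0 < ∫ t in (0:ℝ)..1, (1 - t) ^ α * t ^ β * R.eval t ^ 2 := by
  have hcont : Continuous fun t : ℝ => R.eval t ^ 2 := R.continuous.pow 2
  have hii := intble hα hβ hcont
  rw [intervalIntegral.integral_of_le zero_le_one]
  have hint : IntegrableOn (fun t : ℝ => (1 - t) ^ α * t ^ β * R.eval t ^ 2)
      (Set.Ioc 0 1) volume := by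
    rw [intervalIntegrable_iff, Set.uIoc_of_le zero_le_one] at hii
    exact hii
  rw [MeasureTheory.setIntegral_pos_iff_support_of_nonneg_ae ?_ hint]
  · have hZ : volume {t : ℝ | R.eval t = 0} = 0 :=
      (Polynomial.finite_setOf_isRoot hR).measure_zero _
    have hsub : Set.Ioo (0:ℝ) 1 \ {t : ℝ | R.eval t = 0} ⊆
        Function.support (fun t : ℝ => (1 - t) ^ α * t ^ β * R.eval t ^ 2) ∩ Set.Ioc 0 1 := by
      rintro t ⟨ht, htz⟩
      refine ⟨?_, ht.1, ht.2.le⟩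
      have h1 : (1 - t) ^ α ≠ 0 := (Real.rpow_pos_of_pos (by linarith [ht.2]) α).ne'
      have h2 : t ^ β ≠ 0 := (Real.rpow_pos_of_pos ht.1 β).ne'
      have h3 : R.eval t ^ 2 ≠ 0 := pow_ne_zero 2 (by simpa using htz)
      exact mul_ne_zero (mul_ne_zero h1 h2) h3
    refine lt_of_lt_of_le ?_ (measure_mono hsub)
    rw [measure_diff_null hZ, Real.volume_Ioo]
    norm_num
  · rw [Filter.EventuallyLE, MeasureTheory.ae_restrict_iff' measurableSet_Ioc]
    refine Filter.Eventually.of_forall fun t ht => ?_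
    simp only [Pi.zero_apply]
    have h1 : (0:ℝ) ≤ (1 - t) ^ α := Real.rpow_nonneg (by linarith [ht.2]) α
    have h2 : (0:ℝ) ≤ t ^ β := Real.rpow_nonneg ht.1.le β
    positivity

end Stmt9Aux

open Stmt9Aux in
theorem stmt9 (α β : ℝ) (hα : -1 < α) (hβ : -1 < β) (n m : ℕ) (hmn : m ≤ n)
    (k l : ℤ) (hk : -1 ≤ k) (hl : -1 ≤ l) (hkl : k + l < (m : ℤ) - 1)
    (D : ℕ → Polynomial ℝ)
    (hDmem : ∀ i : ℕ, k + 1 ≤ (i : ℤ) → (i : ℤ) ≤ (m : ℤ) - l - 1 → D i ∈ PiSpace m k l)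
    (hdual : ∀ i j : ℕ, k + 1 ≤ (i : ℤ) → (i : ℤ) ≤ (m : ℤ) - l - 1 →
      k + 1 ≤ (j : ℤ) → (j : ℤ) ≤ (m : ℤ) - l - 1 →
      jacobiInner α β (D i) (bernsteinPolynomial ℝ m j) = if i = j then 1 else 0)
    (W : Polynomial ℝ) (hW : W.degree ≤ n)
    (S : Polynomial ℝ)
    (hS : S = ∑ i ∈ (Finset.range (m + 1)).filter
        (fun i : ℕ => k + 1 ≤ (i : ℤ) ∧ (i : ℤ) ≤ (m : ℤ) - l - 1),
      jacobiInner α β W (D i) • bernsteinPolynomial ℝ m i) :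
    S ∈ PiSpace m k l ∧
      ∀ Q ∈ PiSpace m k l, Q ≠ S →
        (∫ t in (0:ℝ)..1, (1 - t) ^ α * t ^ β * (W.eval t - S.eval t) ^ 2) <
          ∫ t in (0:ℝ)..1, (1 - t) ^ α * t ^ β * (W.eval t - Q.eval t) ^ 2 := by
  classical
  set If := (Finset.range (m + 1)).filter
      (fun i : ℕ => k + 1 ≤ (i : ℤ) ∧ (i : ℤ) ≤ (m : ℤ) - l - 1) with hIfdef
  set k' := (k + 1).toNat with hk'def
  set l' := (l + 1).toNat with hl'def
  have hk'z : (k' : ℤ) = k + 1 := Int.toNat_of_nonneg (by omega)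
  have hl'z : (l' : ℤ) = l + 1 := Int.toNat_of_nonneg (by omega)
  have hkl' : k' + l' ≤ m := by omega
  have hIcc : If = Finset.Icc k' (m - l') := by
    ext i
    simp only [hIfdef, Finset.mem_filter, Finset.mem_range, Finset.mem_Icc]
    omega
  have hmem : ∀ i : ℕ, i ∈ If ↔ (k + 1 ≤ (i : ℤ) ∧ (i : ℤ) ≤ (m : ℤ) - l - 1) := by
    intro i
    simp only [hIfdef, Finset.mem_filter, Finset.mem_range]
    constructor
    · rintro ⟨_, h⟩; exact h
    · rintro ⟨h1, h2⟩; exact ⟨by omega, h1, h2⟩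
  -- representation machinery
  set HasRep : Polynomial ℝ → Prop := fun x => ∃ c : ℕ → ℝ,
    x = ∑ a ∈ If, c a • bernsteinPolynomial ℝ m a with hHasRep
  have hrep_smul : ∀ (r : ℝ) (x), HasRep x → HasRep (r • x) := by
    rintro r x ⟨c, rfl⟩
    exact ⟨fun a => r * c a, by rw [Finset.smul_sum]; simp_rw [smul_smul]⟩
  have hrep_zero : HasRep 0 := ⟨0, by simp⟩
  have hrep_add : ∀ x y, HasRep x → HasRep y → HasRep (x + y) := by
    rintro x y ⟨c, rfl⟩ ⟨c', rfl⟩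
    exact ⟨fun a => c a + c' a, by rw [← Finset.sum_add_distrib]; simp_rw [add_smul]⟩
  have hrep_sum : ∀ {σ : Type} (s : Finset σ) (g : σ → Polynomial ℝ),
      (∀ i ∈ s, HasRep (g i)) → HasRep (∑ i ∈ s, g i) := by
    intro σ s g hg
    induction s using Finset.cons_induction with
    | empty => simpa using hrep_zero
    | cons a s ha ih =>
      rw [Finset.sum_cons]
      exact hrep_add _ _ (hg a (Finset.mem_cons_self a s))
        (ih fun i hi => hg i (Finset.mem_cons.mpr (Or.inr hi)))
  have hrep_of_mem : ∀ p ∈ PiSpace m k l, HasRep p := by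
    intro p hp
    rw [mem_PiSpace_iff] at hp
    obtain ⟨c, hc⟩ := rep_of_conditions m k' l' hkl' p hp.1
      (fun i hi => hp.2.1 i (by omega)) (fun j hj => hp.2.2 j (by omega))
    exact ⟨c, by rw [hIcc]; exact hc⟩
  -- pairing with the dual family
  have hpair : ∀ (x : Polynomial ℝ) (c : ℕ → ℝ),
      x = ∑ a ∈ If, c a • bernsteinPolynomial ℝ m a →
      ∀ a ∈ If, jacobiInner α β (D a) x = c a := by
    intro x c hx a ha
    rw [hx, jacobi_sum_right hα hβ]
    have hterm : ∀ b ∈ If, jacobiInner α β (D a) (c b • bernsteinPolynomial ℝ m b)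
        = if a = b then c b else 0 := by
      intro b hb
      rw [jacobi_smul_right,
        hdual a b ((hmem a).mp ha).1 ((hmem a).mp ha).2 ((hmem b).mp hb).1 ((hmem b).mp hb).2]
      by_cases hab : a = b <;> simp [hab]
    rw [Finset.sum_congr rfl hterm, Finset.sum_ite_eq, if_pos ha]
  have huniq : ∀ x y, HasRep x → HasRep y →
      (∀ a ∈ If, jacobiInner α β (D a) x = jacobiInner α β (D a) y) → x = y := by
    rintro x y ⟨c, hc⟩ ⟨c', hc'⟩ hxy
    rw [hc, hc']
    refine Finset.sum_congr rfl fun a ha => ?_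
    rw [← hpair x c hc a ha, hxy a ha, hpair y c' hc' a ha]
  -- S belongs to the space
  have hSmem : S ∈ PiSpace m k l := by
    rw [hS]
    exact Submodule.sum_mem _ fun i hi => Submodule.smul_mem _ _
      (bern_mem_PiSpace i ((hmem i).mp hi).1 ((hmem i).mp hi).2)
  have hSrep : HasRep S := ⟨fun i => jacobiInner α β W (D i), hS⟩
  -- orthogonality of W - S to the dual family
  have horthD : ∀ a ∈ If, jacobiInner α β (W - S) (D a) = 0 := by
    intro a ha
    have hSc : jacobiInner α β (D a) S = jacobiInner α β W (D a) :=
      hpair S _ hS a ha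
    rw [jacobi_symm (W - S), jacobi_sub_right hα hβ, hSc, jacobi_symm (D a) W, sub_self]
  -- orthogonality of W - S to the whole space, via the Gram matrix of the dual family
  have horthP : ∀ P ∈ PiSpace m k l, jacobiInner α β (W - S) P = 0 := by
    intro P hP
    have hDrep : ∀ a : {x // x ∈ If}, HasRep (D (a : ℕ)) := fun a =>
      hrep_of_mem (D a) (hDmem a ((hmem a).mp a.2).1 ((hmem a).mp a.2).2)
    set G : Matrix {x // x ∈ If} {x // x ∈ If} ℝ :=
      Matrix.of (fun i j => jacobiInner α β (D (i : ℕ)) (D (j : ℕ))) with hG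
    have hcomb : ∀ (v : {x // x ∈ If} → ℝ) (a : ℕ),
        jacobiInner α β (D a) (∑ i ∈ If.attach, v i • D (i : ℕ)) =
          ∑ i ∈ If.attach, jacobiInner α β (D a) (D (i : ℕ)) * v i := by
      intro v a
      rw [jacobi_sum_right hα hβ]
      exact Finset.sum_congr rfl fun i _ => by rw [jacobi_smul_right]; ring
    have hGv : ∀ (v : {x // x ∈ If} → ℝ) (i : {x // x ∈ If}),
        G.mulVec v i = ∑ jj ∈ If.attach, jacobiInner α β (D (i : ℕ)) (D (jj : ℕ)) * v jj := by
      intro v i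
      rw [Matrix.mulVec, dotProduct, Finset.univ_eq_attach]
      rfl
    have hyrep : ∀ v : {x // x ∈ If} → ℝ, HasRep (∑ i ∈ If.attach, v i • D (i : ℕ)) :=
      fun v => hrep_sum _ _ fun i _ => hrep_smul _ _ (hDrep i)
    have hinj : Function.Injective G.mulVecLin := by
      rw [← LinearMap.ker_eq_bot, LinearMap.ker_eq_bot']
      intro v hv
      have hv' : ∀ i : {x // x ∈ If}, G.mulVec v i = 0 := by
        intro i
        have := congrFun (congrArg (fun (w : {x // x ∈ If} → ℝ) => w) hv) i
        simpa [Matrix.mulVecLin_apply] using congrFun hv i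
      have hx0 : (∑ i ∈ If.attach, v i • D (i : ℕ)) = 0 := by
        apply huniq _ 0 (hyrep v) hrep_zero
        intro a ha
        rw [jacobi_zero_right, hcomb v a, ← hGv v ⟨a, ha⟩]
        exact hv' ⟨a, ha⟩
      funext i
      have hvi : jacobiInner α β (bernsteinPolynomial ℝ m (i : ℕ))
          (∑ j ∈ If.attach, v j • D (j : ℕ)) = v i := by
        rw [jacobi_sum_right hα hβ]
        have hterm : ∀ j ∈ If.attach,
            jacobiInner α β (bernsteinPolynomial ℝ m (i : ℕ)) (v j • D (j : ℕ))
              = if j = i then v j else 0 := by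
          intro j _
          rw [jacobi_smul_right, jacobi_symm,
            hdual (j : ℕ) (i : ℕ) ((hmem j).mp j.2).1 ((hmem j).mp j.2).2
              ((hmem i).mp i.2).1 ((hmem i).mp i.2).2]
          by_cases hji : j = i
          · simp [hji]
          · have : ((j : ℕ) : ℕ) ≠ ((i : ℕ) : ℕ) := fun hc => hji (Subtype.ext hc)
            simp [this, hji]
        rw [Finset.sum_congr rfl hterm, Finset.sum_ite_eq', if_pos (Finset.mem_attach _ i)]
      rw [hx0, jacobi_zero_right] at hvi
      exact hvi.symm
    have hsurj : Function.Surjective G.mulVecLin :=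
      (LinearMap.injective_iff_surjective).mp hinj
    obtain ⟨v, hv⟩ := hsurj (fun i => jacobiInner α β (D (i : ℕ)) P)
    have hPy : P = ∑ i ∈ If.attach, v i • D (i : ℕ) := by
      apply huniq _ _ (hrep_of_mem P hP) (hyrep v)
      intro a ha
      rw [hcomb v a, ← hGv v ⟨a, ha⟩]
      have := congrFun hv ⟨a, ha⟩
      rw [Matrix.mulVecLin_apply] at this
      rw [this]
    rw [hPy, jacobi_sum_right hα hβ]
    refine Finset.sum_eq_zero fun i _ => ?_
    rw [jacobi_smul_right, horthD (i : ℕ) i.2, mul_zero]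
  -- conclusion
  refine ⟨hSmem, fun Q hQ hQS => ?_⟩
  have hSQmem : S - Q ∈ PiSpace m k l := Submodule.sub_mem _ hSmem hQ
  have horth := horthP (S - Q) hSQmem
  have hR0 : S - Q ≠ 0 := sub_ne_zero_of_ne (Ne.symm hQS)
  have key : (∫ t in (0:ℝ)..1, (1 - t) ^ α * t ^ β * (W.eval t - Q.eval t) ^ 2)
      = (∫ t in (0:ℝ)..1, (1 - t) ^ α * t ^ β * (W.eval t - S.eval t) ^ 2)
        + (2 * jacobiInner α β (W - S) (S - Q)
          + ∫ t in (0:ℝ)..1, (1 - t) ^ α * t ^ β * (S - Q).eval t ^ 2) := by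
    have i1 : IntervalIntegrable
        (fun t : ℝ => (1 - t) ^ α * t ^ β * (W.eval t - S.eval t) ^ 2) volume 0 1 :=
      intble hα hβ ((W.continuous.sub S.continuous).pow 2)
    have i2 : IntervalIntegrable
        (fun t : ℝ => (1 - t) ^ α * t ^ β * ((W - S).eval t * (S - Q).eval t)) volume 0 1 :=
      jacobi_intble hα hβ _ _
    have i3 : IntervalIntegrable
        (fun t : ℝ => (1 - t) ^ α * t ^ β * (S - Q).eval t ^ 2) volume 0 1 :=
      intble hα hβ ((S - Q).continuous.pow 2)
    have h2j : 2 * jacobiInner α β (W - S) (S - Q)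
        = ∫ t in (0:ℝ)..1, 2 * ((1 - t) ^ α * t ^ β * ((W - S).eval t * (S - Q).eval t)) :=
      (intervalIntegral.integral_const_mul _ _).symm
    rw [h2j, ← intervalIntegral.integral_add (i2.const_mul 2) i3,
      ← intervalIntegral.integral_add i1 ((i2.const_mul 2).add i3)]
    apply intervalIntegral.integral_congr
    intro t _
    simp only [eval_sub]
    ring
  rw [key, horth]
  have hpos := pos_integral hα hβ (S - Q) hR0
  linarith
end

section
/- Let n ≥ 3 and m ≥ 3 be integers, let p_0,…,p_n ∈ ℝ^d and r_0,…,r_m ∈ ℝ^d, set P_n(t) := Σ_{i=0}^{n} p_i B_i^n(t) and R_m(t) := Σ_{i=0}^{m} r_i B_i^m(t), and let λ_1, λ_2, λ_3 be real numbers. Suppose the G³ conditions at t = 0 hold: R_m(0) = P_n(0), R_m'(0) = λ_1 P_n'(0), R_m''(0) = λ_1² P_n''(0) + λ_2 P_n'(0), and R_m'''(0) = λ_1³ P_n'''(0) + 3λ_1λ_2 P_n''(0) + λ_3 P_n'(0). Then: r_0 = p_0; r_1 = p_0 + (n/m)λ_1 Δp_0; r_2 = p_0 + (n/m)[2λ_1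 + λ_2/(m-1)] Δp_0 + ((n-1)_2/(m-1)_2) λ_1² Δ²p_0; and r_3 = p_0 + (n/m)[3λ_1 + 3λ_2/(m-1) + λ_3/((m-2)_2)] Δp_0 + 3((n-1)_2/(m-1)_2)[λ_1² + λ_1λ_2/(m-2)] Δ²p_0 + ((n-2)_3/(m-2)_3) λ_1³ Δ³p_0, where (a)_k denotes the Pochhammer symbol and Δ is the forward difference operator. -/
open MeasureTheory Polynomial

/-- Forward difference operator: `fdiff q k i = Δ^k q_i`. -/
def fdiff {E : Type*} [AddCommGroup E] (q : ℕ → E) : ℕ → ℕ → E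
  | 0, i => q i
  | k + 1, i => fdiff q k (i + 1) - fdiff q k i

/-!
Differentiating a Bézier curve of degree `N` gives `N` times the Bézier curve of degree `N - 1`
whose control points are the forward differences `Δq_i`; iterating, the `k`-th derivative at
`t = 0` is `N (N - 1) ⋯ (N - k + 1) Δ^k q_0`. The G³ conditions therefore determine `Δ^k r_0` for
`k ≤ 3` in terms of the `Δ^k p_0`, and the Gregory–Newton formula
`r_k = ∑_j C(k, j) Δ^j r_0` turns these into the control points `r_0, …, r_3`.
-/

open Finset

section ForwardDifferences

variable {E : Type*} [AddCommGroup E]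

lemma fdiff_succ (q : ℕ → E) (k : ℕ) : fdiff q (k + 1) = fdiff (fdiff q 1) k := by
  induction k with
  | zero => rfl
  | succ k ih => funext i; rw [fdiff, ih]; rfl

lemma fdiff_eq_fwdDiff_iterate (q : ℕ → E) (k : ℕ) : fdiff q k = (fwdDiff 1)^[k] q := by
  induction k with
  | zero => rfl
  | succ k ih => funext i; rw [Function.iterate_succ_apply', ← ih]; rfl

lemma eq_sum_choose_smul_fdiff (q : ℕ → E) (k : ℕ) :
    q k = ∑ j ∈ range (k + 1), k.choose j • fdiff q j 0 := by
  simpa [fdiff_eq_fwdDiff_iterate] using shift_eq_sum_fwdDiff_iter 1 q k 0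

end ForwardDifferences

lemma bern_eq_eval (N i : ℕ) (t : ℝ) : bern N i t = (bernsteinPolynomial ℝ N i).eval t := by
  simp [bern, bernsteinPolynomial]

lemma bern_apply_zero (N i : ℕ) : bern N i 0 = if i = 0 then 1 else 0 := by
  rw [bern_eq_eval, bernsteinPolynomial.eval_at_0]

lemma hasDerivAt_bern_succ_zero (N : ℕ) (t : ℝ) :
    HasDerivAt (bern (N + 1) 0) (-(N + 1) * bern N 0 t) t := by
  have h := (bernsteinPolynomial ℝ (N + 1) 0).hasDerivAt t
  rw [bernsteinPolynomial.derivative_zero] at h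
  simpa [funext (bern_eq_eval _ _), bern_eq_eval] using h

lemma hasDerivAt_bern_succ_succ (N i : ℕ) (t : ℝ) :
    HasDerivAt (bern (N + 1) (i + 1)) ((N + 1) * (bern N i t - bern N (i + 1) t)) t := by
  have h := (bernsteinPolynomial ℝ (N + 1) (i + 1)).hasDerivAt t
  rw [bernsteinPolynomial.derivative_succ] at h
  simpa [funext (bern_eq_eval _ _), bern_eq_eval] using h

noncomputable def bezier {E : Type*} [AddCommGroup E] [Module ℝ E] (N : ℕ) (q : ℕ → E)
    (t : ℝ) : E :=
  ∑ i ∈ range (N + 1), bern N i t • q i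

lemma bezier_apply_zero {E : Type*} [AddCommGroup E] [Module ℝ E] (N : ℕ) (q : ℕ → E) :
    bezier N q 0 = q 0 := by
  rw [bezier, sum_eq_single 0 (fun i _ hi => by simp [bern_apply_zero, hi]) (by simp)]
  simp [bern_apply_zero]

section BezierDerivatives

variable {E : Type*} [NormedAddCommGroup E] [NormedSpace ℝ E]

lemma hasDerivAt_bezier_succ (N : ℕ) (q : ℕ → E) (t : ℝ) :
    HasDerivAt (bezier (N + 1) q) ((N + 1 : ℝ) • bezier N (fdiff q 1) t) t := by
  have hsplit : bezier (N + 1) q =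
      fun y => ∑ i ∈ range (N + 1), bern (N + 1) (i + 1) y • q (i + 1) + bern (N + 1) 0 y • q 0 :=
    funext fun y => sum_range_succ' _ _
  have hlast : bern N (N + 1) t = 0 := by simp [bern]
  rw [hsplit]
  convert (HasDerivAt.fun_sum fun i _ =>
      (hasDerivAt_bern_succ_succ N i t).smul_const (q (i + 1))).fun_add
    ((hasDerivAt_bern_succ_zero N t).smul_const (q 0)) using 1
  -- summation by parts
  calc (N + 1 : ℝ) • bezier N (fdiff q 1) t
      = (N + 1 : ℝ) • (∑ i ∈ range (N + 1), bern N i t • q (i + 1) -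
          ∑ i ∈ range (N + 1 + 1), bern N i t • q i) := by
        rw [sum_range_succ _ (N + 1), hlast, zero_smul, add_zero, ← sum_sub_distrib]
        simp only [bezier, fdiff, smul_sub]
    _ = _ := by
        rw [sum_range_succ' (fun i => bern N i t • q i)]
        simp only [smul_sub, smul_add, sum_sub_distrib, smul_sum, mul_smul, sub_smul, neg_mul,
          neg_smul]
        abel

lemma deriv_bezier (N : ℕ) (q : ℕ → E) :
    deriv (bezier N q) = (N : ℝ) • bezier (N - 1) (fdiff q 1) := by
  funext t
  cases N with
  | zero =>
    have hconst : bezier 0 q = fun _ => q 0 := by funext; simp [bezier, bern]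
    simp [hconst]
  | succ N => simpa using (hasDerivAt_bezier_succ N q t).deriv

lemma iteratedDeriv_bezier (k N : ℕ) (q : ℕ → E) :
    iteratedDeriv k (bezier N q) = (N.descFactorial k : ℝ) • bezier (N - k) (fdiff q k) := by
  induction k generalizing N q with
  | zero => simp [fdiff]
  | succ k ih =>
    funext t
    rw [iteratedDeriv_succ', deriv_bezier, iteratedDeriv_const_smul_field, ih, ← fdiff_succ,
      Pi.smul_apply, Pi.smul_apply, smul_smul]
    cases N with
    | zero => simp
    | succ N =>
      rw [Nat.succ_descFactorial_succ, Nat.add_sub_cancel, Nat.add_sub_add_right]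
      push_cast
      rfl

lemma iteratedDeriv_bezier_apply_zero (k N : ℕ) (q : ℕ → E) :
    iteratedDeriv k (bezier N q) 0 = (N.descFactorial k : ℝ) • fdiff q k 0 := by
  rw [iteratedDeriv_bezier, Pi.smul_apply, bezier_apply_zero]

end BezierDerivatives

lemma Nat.cast_descFactorial_three {S : Type*} [CommRing S] (a : ℕ) :
    (a.descFactorial 3 : S) = a * (a - 1) * (a - 2) := by
  rcases a with _ | _ | a
  · simp
  · simp
  · rw [Nat.descFactorial_succ, Nat.cast_mul, Nat.cast_descFactorial_two]
    push_cast
    ring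

lemma poch_sub_one_two (x : ℝ) : poch (x - 1) 2 = x * (x - 1) := by
  simp [poch, ascPochhammer_succ_right]; ring

lemma poch_sub_two_two (x : ℝ) : poch (x - 2) 2 = (x - 1) * (x - 2) := by
  simp [poch, ascPochhammer_succ_right]; ring

lemma poch_sub_two_three (x : ℝ) : poch (x - 2) 3 = x * (x - 1) * (x - 2) := by
  simp [poch, ascPochhammer_succ_right]; ring

theorem stmt13_general (d n m : ℕ) (hm : 3 ≤ m)
    (p r : ℕ → EuclideanSpace ℝ (Fin d)) (lam1 lam2 lam3 : ℝ)
    (P R : ℝ → EuclideanSpace ℝ (Fin d))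
    (hP : P = fun t : ℝ => ∑ i ∈ Finset.range (n + 1), bern n i t • p i)
    (hR : R = fun t : ℝ => ∑ i ∈ Finset.range (m + 1), bern m i t • r i)
    -- the G³ conditions at t = 0
    (h0 : R 0 = P 0)
    (h1 : deriv R 0 = lam1 • deriv P 0)
    (h2 : iteratedDeriv 2 R 0 = lam1 ^ 2 • iteratedDeriv 2 P 0 + lam2 • deriv P 0)
    (h3 : iteratedDeriv 3 R 0 = lam1 ^ 3 • iteratedDeriv 3 P 0 +
      (3 * lam1 * lam2) • iteratedDeriv 2 P 0 + lam3 • deriv P 0) :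
    r 0 = p 0 ∧
    r 1 = p 0 + ((n : ℝ) / (m : ℝ) * lam1) • fdiff p 1 0 ∧
    r 2 = p 0 + ((n : ℝ) / (m : ℝ) * (2 * lam1 + lam2 / ((m : ℝ) - 1))) • fdiff p 1 0 +
        (poch ((n : ℝ) - 1) 2 / poch ((m : ℝ) - 1) 2 * lam1 ^ 2) • fdiff p 2 0 ∧
    r 3 = p 0 +
        ((n : ℝ) / (m : ℝ) *
          (3 * lam1 + 3 * lam2 / ((m : ℝ) - 1) + lam3 / poch ((m : ℝ) - 2) 2)) • fdiff p 1 0 +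
        (3 * (poch ((n : ℝ) - 1) 2 / poch ((m : ℝ) - 1) 2) *
          (lam1 ^ 2 + lam1 * lam2 / ((m : ℝ) - 2))) • fdiff p 2 0 +
        (poch ((n : ℝ) - 2) 3 / poch ((m : ℝ) - 2) 3 * lam1 ^ 3) • fdiff p 3 0 := by
  obtain rfl : P = bezier n p := hP
  obtain rfl : R = bezier m r := hR
  rw [bezier_apply_zero, bezier_apply_zero] at h0
  simp only [← iteratedDeriv_one, iteratedDeriv_bezier_apply_zero, Nat.descFactorial_one,
    Nat.cast_descFactorial_two, Nat.cast_descFactorial_three] at h1 h2 h3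
  have hm' : (3 : ℝ) ≤ m := by exact_mod_cast hm
  have hm0 : (m : ℝ) ≠ 0 := by linarith
  have hm1 : (m : ℝ) - 1 ≠ 0 := by linarith
  have hm2 : (m : ℝ) - 2 ≠ 0 := by linarith
  rw [← eq_inv_smul_iff₀ hm0] at h1
  rw [← eq_inv_smul_iff₀ (mul_ne_zero hm0 hm1)] at h2
  rw [← eq_inv_smul_iff₀ (mul_ne_zero (mul_ne_zero hm0 hm1) hm2)] at h3
  have hr0 : fdiff r 0 0 = p 0 := h0
  refine ⟨h0, ?_, ?_, ?_⟩ <;> rw [eq_sum_choose_smul_fdiff r]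
  all_goals
    simp only [sum_range_succ, sum_range_zero, zero_add, Nat.choose, hr0, h1, h2, h3,
      poch_sub_one_two, poch_sub_two_two, poch_sub_two_three]
    match_scalars <;> field_simp <;> ring

theorem stmt13 (d n m : ℕ) (hn : 3 ≤ n) (hm : 3 ≤ m)
    (p r : ℕ → EuclideanSpace ℝ (Fin d)) (lam1 lam2 lam3 : ℝ)
    (P R : ℝ → EuclideanSpace ℝ (Fin d))
    (hP : P = fun t : ℝ => ∑ i ∈ Finset.range (n + 1), bern n i t • p i)
    (hR : R = fun t : ℝ => ∑ i ∈ Finset.range (m + 1), bern m i t • r i)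
    -- the G³ conditions at t = 0
    (h0 : R 0 = P 0)
    (h1 : deriv R 0 = lam1 • deriv P 0)
    (h2 : iteratedDeriv 2 R 0 = lam1 ^ 2 • iteratedDeriv 2 P 0 + lam2 • deriv P 0)
    (h3 : iteratedDeriv 3 R 0 = lam1 ^ 3 • iteratedDeriv 3 P 0 +
      (3 * lam1 * lam2) • iteratedDeriv 2 P 0 + lam3 • deriv P 0) :
    r 0 = p 0 ∧
    r 1 = p 0 + ((n : ℝ) / (m : ℝ) * lam1) • fdiff p 1 0 ∧
    r 2 = p 0 + ((n : ℝ) / (m : ℝ) * (2 * lam1 + lam2 / ((m : ℝ) - 1))) • fdiff p 1 0 +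
        (poch ((n : ℝ) - 1) 2 / poch ((m : ℝ) - 1) 2 * lam1 ^ 2) • fdiff p 2 0 ∧
    r 3 = p 0 +
        ((n : ℝ) / (m : ℝ) *
          (3 * lam1 + 3 * lam2 / ((m : ℝ) - 1) + lam3 / poch ((m : ℝ) - 2) 2)) • fdiff p 1 0 +
        (3 * (poch ((n : ℝ) - 1) 2 / poch ((m : ℝ) - 1) 2) *
          (lam1 ^ 2 + lam1 * lam2 / ((m : ℝ) - 2))) • fdiff p 2 0 +
        (poch ((n : ℝ) - 2) 3 / poch ((m : ℝ) - 2) 3 * lam1 ^ 3) • fdiff p 3 0 :=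
  stmt13_general d n m hm p r lam1 lam2 lam3 P R hP hR h0 h1 h2 h3
end

section
/- Let α, β > -1 be real numbers, let n > m > 4 be integers with n ≥ 2, and let p_0,…,p_n ∈ ℝ^d with P_n(t) := Σ_{i=0}^{n} p_i B_i^n(t). For real parameters λ_1, λ_2, μ_1, μ_2, define the boundary control points r_0 := p_0, r_1 := p_0 + (n/m)λ_1 Δp_0, r_2 := p_0 + (n/m)[2λ_1 + λ_2/(m-1)]Δp_0 + ((n-1)_2/(m-1)_2)λ_1² Δ²p_0, r_{m-2} := p_n - (n/m)[2μ_1 - μ_2/(m-1)]Δp_{n-1} + ((n-1)_2/(m-1)_2)μ_1² Δ²p_{n-2}, r_{m-1} := p_n - (n/m)μ_1 Δp_{n-1}, r_m := p_n, and define the inner control points r_3,…,r_{m-3} to be the unique minimizers of E(λ_1,λ_2,μ_1,μ_2) := ∫₀¹ (1-t)^α t^β ‖P_n(t) - Σ_{i=0}^{m} r_i B_i^m(t)‖² dt for these fixed boundary points (via the constrained dual Bernstein basis of Π_m^{(2,2)}). Then the function (λ_1,λ_2,μ_1,μ_2) ↦ E(λ_1,λ_2,μ_1,μ_2) is a polynomial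 function of total degree at most 4. -/
/-!
Every boundary control point is a polynomial of degree at most 2 in `(λ₁, λ₂, μ₁, μ₂)` with
coefficients in `ℝ^d`, and every inner control point is an affine combination of boundary points.
Hence the error curve `P_n - Σ rᵢ Bᵢ^m`, viewed in `C(ℝ, ℝ^d)`, is a polynomial map of degree at
most 2 in the parameters, and `E` is the weighted `L²` form evaluated on it twice: a bilinear map
applied to polynomial maps of degrees `a` and `b` is a polynomial map of degree `a + b`.
-/

open MeasureTheory Polynomial

section PolyMaps

variable (σ R M : Type*) [CommRing R] [AddCommGroup M] [Module R M]

def polyMaps (k : ℕ) : Submodule R ((σ → R) → M) :=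
  Submodule.span R {f | ∃ (P : MvPolynomial σ R) (v : M),
    P.totalDegree ≤ k ∧ f = fun x => MvPolynomial.eval x P • v}

variable {σ R M} {N W : Type*} [AddCommGroup N] [Module R N] [AddCommGroup W] [Module R W]
  {k l : ℕ}

theorem eval_smul_mem_polyMaps {Q : MvPolynomial σ R} (hQ : Q.totalDegree ≤ k) (v : M) :
    (fun x => MvPolynomial.eval x Q • v) ∈ polyMaps σ R M k :=
  Submodule.subset_span ⟨Q, v, hQ, rfl⟩

theorem const_mem_polyMaps (v : M) : (fun _ => v) ∈ polyMaps σ R M k := by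
  simpa using eval_smul_mem_polyMaps (R := R) (σ := σ)
    (MvPolynomial.totalDegree_one.trans_le k.zero_le) v

theorem finsetSum_mem_polyMaps {ι : Type*} {s : Finset ι} {f : ι → (σ → R) → M}
    (hf : ∀ i ∈ s, f i ∈ polyMaps σ R M k) : (fun x => ∑ i ∈ s, f i x) ∈ polyMaps σ R M k := by
  simpa only [Finset.sum_fn] using Submodule.sum_mem _ hf

theorem comp_mem_polyMaps (L : M →ₗ[R] N) {f : (σ → R) → M} (hf : f ∈ polyMaps σ R M k) :
    L ∘ f ∈ polyMaps σ R N k := by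
  suffices polyMaps σ R M k ≤ (polyMaps σ R N k).comap (L.compLeft (σ → R)) from this hf
  refine Submodule.span_le.2 fun _ ⟨Q, v, hQ, hf⟩ => ?_
  subst hf
  show (fun x => L (MvPolynomial.eval x Q • v)) ∈ polyMaps σ R N k
  simpa using eval_smul_mem_polyMaps hQ (L v)

theorem apply₂_mem_polyMaps (B : M →ₗ[R] N →ₗ[R] W) {f : (σ → R) → M} {g : (σ → R) → N}
    (hf : f ∈ polyMaps σ R M k) (hg : g ∈ polyMaps σ R N l) :
    (fun x => B (f x) (g x)) ∈ polyMaps σ R W (k + l) := by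
  induction hf using Submodule.span_induction with
  | mem f hf =>
    obtain ⟨Q, v, hQ, rfl⟩ := hf
    induction hg using Submodule.span_induction with
    | mem g hg =>
      obtain ⟨Q', w, hQ', rfl⟩ := hg
      simpa [smul_smul, mul_comm] using eval_smul_mem_polyMaps
        ((MvPolynomial.totalDegree_mul Q Q').trans (add_le_add hQ hQ')) (B v w)
    | zero =>
      simpa only [Pi.zero_apply, map_zero, LinearMap.zero_apply, ← Pi.zero_def] using
        zero_mem (polyMaps σ R W (k + l))
    | add g g' _ _ hg hg' => simpa [Pi.add_def] using add_mem hg hg'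
    | smul c g _ hg => simpa [Pi.smul_def, smul_comm _ c] using Submodule.smul_mem _ c hg
  | zero =>
    simpa only [Pi.zero_apply, map_zero, LinearMap.zero_apply, ← Pi.zero_def] using
      zero_mem (polyMaps σ R W (k + l))
  | add f f' _ _ hf hf' => simpa [Pi.add_def] using add_mem hf hf'
  | smul c f _ hf => simpa [Pi.smul_def] using Submodule.smul_mem _ c hf

theorem exists_eq_eval_of_mem_polyMaps {f : (σ → R) → R} (hf : f ∈ polyMaps σ R R k) :
    ∃ F : MvPolynomial σ R, F.totalDegree ≤ k ∧ f = fun x => MvPolynomial.eval x F := by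
  induction hf using Submodule.span_induction with
  | mem f hf =>
    obtain ⟨Q, c, hQ, rfl⟩ := hf
    refine ⟨Q * MvPolynomial.C c, ?_, by simp⟩
    simpa using (MvPolynomial.totalDegree_mul Q _).trans (by simpa using hQ)
  | zero => exact ⟨0, by simp, funext fun x => by simp⟩
  | add f g _ _ hf hg =>
    obtain ⟨F, hF, rfl⟩ := hf
    obtain ⟨G, hG, rfl⟩ := hg
    exact ⟨F + G, (MvPolynomial.totalDegree_add F G).trans (max_le hF hG), funext fun x => by simp⟩
  | smul c f _ hf =>
    obtain ⟨F, hF, rfl⟩ := hf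
    exact ⟨c • F, (MvPolynomial.totalDegree_smul_le c F).trans hF, funext fun x => by simp⟩

theorem quadratic_mem_polyMaps (i j : σ) (a b c : R) (v₀ v₁ v₂ : M) :
    (fun x => v₀ + (a * x i + b * x j) • v₁ + (c * x i ^ 2) • v₂) ∈ polyMaps σ R M 2 := by
  have hmonomial : ∀ (s : σ →₀ ℕ) (c : R), s.sum (fun _ => id) ≤ 2 →
      (MvPolynomial.monomial s c).totalDegree ≤ 2 :=
    fun s c hs => (MvPolynomial.totalDegree_monomial_le s c).trans hs
  have hlinear := eval_smul_mem_polyMaps (M := M) (k := 2)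
    ((MvPolynomial.totalDegree_add _ _).trans (max_le
      (hmonomial (Finsupp.single i 1) a (by simp)) (hmonomial (Finsupp.single j 1) b (by simp)))) v₁
  have hsquare := eval_smul_mem_polyMaps (M := M) (hmonomial (Finsupp.single i 2) c (by simp)) v₂
  simpa [Pi.add_def, MvPolynomial.eval_monomial] using
    add_mem (add_mem (const_mem_polyMaps v₀) hlinear) hsquare

end PolyMaps

theorem intervalIntegrable_one_sub_rpow_mul_rpow {α β : ℝ} (hα : -1 < α) (hβ : -1 < β) :
    IntervalIntegrable (fun t : ℝ => (1 - t) ^ α * t ^ β) volume 0 1 := by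
  have hβ' : IntervalIntegrable (fun t : ℝ => t ^ β) volume 0 1 :=
    intervalIntegral.intervalIntegrable_rpow' hβ
  have hα' : IntervalIntegrable (fun t : ℝ => (1 - t) ^ α) volume 0 1 := by
    simpa using
      ((intervalIntegral.intervalIntegrable_rpow' (a := 0) (b := 1) hα).comp_sub_left 1).symm
  -- each factor is singular only at one endpoint, and continuous near the other one
  have hleft : IntervalIntegrable (fun t : ℝ => (1 - t) ^ α * t ^ β) volume 0 (1 / 2) := by
    refine (hβ'.mono_set ?_).continuousOn_mul ?_
    · rw [Set.uIcc_of_le (by norm_num), Set.uIcc_of_le (by norm_num)]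
      exact Set.Icc_subset_Icc le_rfl (by norm_num)
    · refine ContinuousOn.rpow_const (by fun_prop) fun t ht => Or.inl ?_
      rw [Set.uIcc_of_le (by norm_num)] at ht
      linarith [ht.2]
  have hright : IntervalIntegrable (fun t : ℝ => (1 - t) ^ α * t ^ β) volume (1 / 2) 1 := by
    refine (hα'.mono_set ?_).mul_continuousOn ?_
    · rw [Set.uIcc_of_le (by norm_num), Set.uIcc_of_le (by norm_num)]
      exact Set.Icc_subset_Icc (by norm_num) le_rfl
    · refine ContinuousOn.rpow_const (by fun_prop) fun t ht => Or.inl ?_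
      rw [Set.uIcc_of_le (by norm_num)] at ht
      linarith [ht.1]
  exact hleft.trans hright

section ContinuousMap

variable {E : Type*} [NormedAddCommGroup E] [NormedSpace ℝ E]

@[simps]
def smulConstₗ {X : Type*} [TopologicalSpace X] (φ : C(X, ℝ)) : E →ₗ[ℝ] C(X, E) where
  toFun v := ⟨fun t => φ t • v, by fun_prop⟩
  map_add' v v' := by ext t; simp [smul_add]
  map_smul' c v := by ext t; simp [smul_comm c]

end ContinuousMap

section WeightedInner

open scoped RealInnerProductSpace

variable {σ E ι : Type*} [NormedAddCommGroup E] [InnerProductSpace ℝ E] {k : ℕ}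

theorem intervalIntegrable_mul_inner {w : ℝ → ℝ} {a b : ℝ} (hw : IntervalIntegrable w volume a b)
    (f g : C(ℝ, E)) : IntervalIntegrable (fun t => w t * ⟪f t, g t⟫) volume a b :=
  hw.mul_continuousOn (by fun_prop : Continuous fun t => ⟪f t, g t⟫).continuousOn

noncomputable def weightedInnerₗ (w : ℝ → ℝ) (a b : ℝ) (hw : IntervalIntegrable w volume a b) :
    C(ℝ, E) →ₗ[ℝ] C(ℝ, E) →ₗ[ℝ] ℝ :=
  LinearMap.mk₂ ℝ (fun f g => ∫ t in a..b, w t * ⟪f t, g t⟫)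
    (fun f f' g => by
      simp only [ContinuousMap.add_apply, inner_add_left, mul_add]
      exact intervalIntegral.integral_add (intervalIntegrable_mul_inner hw f g)
        (intervalIntegrable_mul_inner hw f' g))
    (fun c f g => by
      simp only [ContinuousMap.smul_apply, real_inner_smul_left, mul_left_comm _ c]
      exact intervalIntegral.integral_const_mul c _)
    (fun f g g' => by
      simp only [ContinuousMap.add_apply, inner_add_right, mul_add]
      exact intervalIntegral.integral_add (intervalIntegrable_mul_inner hw f g)
        (intervalIntegrable_mul_inner hw f g'))
    (fun c f g => by
      simp only [ContinuousMap.smul_apply, real_inner_smul_right, mul_left_comm _ c]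
      exact intervalIntegral.integral_const_mul c _)

theorem weightedInnerₗ_apply (w : ℝ → ℝ) (a b : ℝ) (hw : IntervalIntegrable w volume a b)
    (f g : C(ℝ, E)) : weightedInnerₗ w a b hw f g = ∫ t in a..b, w t * ⟪f t, g t⟫ :=
  rfl

theorem integral_mul_norm_sub_sum_smul_sq_mem_polyMaps {w : ℝ → ℝ} {a b : ℝ}
    (hw : IntervalIntegrable w volume a b) (P : C(ℝ, E)) (φ : ι → C(ℝ, ℝ)) (s : Finset ι)
    {r : ι → (σ → ℝ) → E} (hr : ∀ i ∈ s, r i ∈ polyMaps σ ℝ E k) :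
    (fun x => ∫ t in a..b, w t * ‖P t - ∑ i ∈ s, φ i t • r i x‖ ^ 2) ∈
      polyMaps σ ℝ ℝ (k + k) := by
  have he : (fun x => P - ∑ i ∈ s, smulConstₗ (φ i) (r i x)) ∈ polyMaps σ ℝ C(ℝ, E) k :=
    sub_mem (const_mem_polyMaps P)
      (finsetSum_mem_polyMaps fun i hi => comp_mem_polyMaps (smulConstₗ (φ i)) (hr i hi))
  convert apply₂_mem_polyMaps (weightedInnerₗ w a b hw) he he using 2 with x
  rw [weightedInnerₗ_apply]
  simp only [ContinuousMap.sub_apply, ContinuousMap.coe_sum, Finset.sum_apply,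
    smulConstₗ_apply_apply, real_inner_self_eq_norm_sq]

end WeightedInner

theorem stmt16_general (α β : ℝ) (hα : -1 < α) (hβ : -1 < β) (d n m : ℕ)
    (p : ℕ → EuclideanSpace ℝ (Fin d))
    -- the constrained dual Bernstein basis of `Π_m^{(2,2)}`
    (D : ℕ → Polynomial ℝ)
    -- the control points, as functions of the parameters λ₁, λ₂, μ₁, μ₂:
    (rf : ℝ → ℝ → ℝ → ℝ → ℕ → EuclideanSpace ℝ (Fin d))
    -- boundary control points
    (hr0 : ∀ lam1 lam2 mu1 mu2 : ℝ, rf lam1 lam2 mu1 mu2 0 = p 0)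
    (hr1 : ∀ lam1 lam2 mu1 mu2 : ℝ,
      rf lam1 lam2 mu1 mu2 1 = p 0 + ((n : ℝ) / (m : ℝ) * lam1) • fdiff p 1 0)
    (hr2 : ∀ lam1 lam2 mu1 mu2 : ℝ,
      rf lam1 lam2 mu1 mu2 2 = p 0 +
        ((n : ℝ) / (m : ℝ) * (2 * lam1 + lam2 / ((m : ℝ) - 1))) • fdiff p 1 0 +
        (poch ((n : ℝ) - 1) 2 / poch ((m : ℝ) - 1) 2 * lam1 ^ 2) • fdiff p 2 0)
    (hrm2 : ∀ lam1 lam2 mu1 mu2 : ℝ,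
      rf lam1 lam2 mu1 mu2 (m - 2) = p n -
        ((n : ℝ) / (m : ℝ) * (2 * mu1 - mu2 / ((m : ℝ) - 1))) • fdiff p 1 (n - 1) +
        (poch ((n : ℝ) - 1) 2 / poch ((m : ℝ) - 1) 2 * mu1 ^ 2) • fdiff p 2 (n - 2))
    (hrm1 : ∀ lam1 lam2 mu1 mu2 : ℝ,
      rf lam1 lam2 mu1 mu2 (m - 1) = p n - ((n : ℝ) / (m : ℝ) * mu1) • fdiff p 1 (n - 1))
    (hrm : ∀ lam1 lam2 mu1 mu2 : ℝ, rf lam1 lam2 mu1 mu2 m = p n)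
    -- inner control points: the unique minimizers for the fixed boundary points,
    -- given via the constrained dual Bernstein basis
    (hrin : ∀ (lam1 lam2 mu1 mu2 : ℝ) (i : ℕ), 3 ≤ i → i ≤ m - 3 →
      rf lam1 lam2 mu1 mu2 i = ∑ j ∈ Finset.range (n + 1),
        jacobiInner α β (bernsteinPolynomial ℝ n j) (D i) •
          (p j - ((n.choose j : ℝ))⁻¹ •
            ∑ h ∈ (Finset.range (m + 1)).filter (fun h : ℕ => h ≤ 2 ∨ m - 2 ≤ h),
              (chZ (n - m) ((j : ℤ) - (h : ℤ)) * (m.choose h : ℝ)) •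
                rf lam1 lam2 mu1 mu2 h)) :
    -- the error `E(λ₁, λ₂, μ₁, μ₂)` is a polynomial function of total degree at most 4
    ∃ F : MvPolynomial (Fin 4) ℝ, F.totalDegree ≤ 4 ∧
      ∀ lam1 lam2 mu1 mu2 : ℝ,
        (∫ t in (0:ℝ)..1, (1 - t) ^ α * t ^ β *
            ‖(∑ i ∈ Finset.range (n + 1), bern n i t • p i) -
              (∑ i ∈ Finset.range (m + 1), bern m i t • rf lam1 lam2 mu1 mu2 i)‖ ^ 2) =
          MvPolynomial.eval ![lam1, lam2, mu1, mu2] F := by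
  set r : ℕ → (Fin 4 → ℝ) → EuclideanSpace ℝ (Fin d) := fun i x => rf (x 0) (x 1) (x 2) (x 3) i
  have hbdry : ∀ h ≤ m, h ≤ 2 ∨ m - 2 ≤ h → r h ∈ polyMaps (Fin 4) ℝ _ 2 := by
    intro h hhm hh
    obtain rfl | rfl | rfl | rfl | rfl | rfl :
        h = 0 ∨ h = 1 ∨ h = 2 ∨ h = m - 2 ∨ h = m - 1 ∨ h = m := by omega
    · simpa [r, hr0] using const_mem_polyMaps (p 0)
    · convert quadratic_mem_polyMaps (σ := Fin 4) 0 0 ((n : ℝ) / m) 0 0 (p 0) (fdiff p 1 0) 0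
        using 1
      funext x; simp [r, hr1]
    · convert quadratic_mem_polyMaps (σ := Fin 4) 0 1 ((n : ℝ) / m * 2) ((n : ℝ) / m / (m - 1))
        (poch ((n : ℝ) - 1) 2 / poch ((m : ℝ) - 1) 2) (p 0) (fdiff p 1 0) (fdiff p 2 0) using 1
      funext x; simp only [r, hr2]; module
    · convert quadratic_mem_polyMaps (σ := Fin 4) 2 3 (-((n : ℝ) / m * 2)) ((n : ℝ) / m / (m - 1))
        (poch ((n : ℝ) - 1) 2 / poch ((m : ℝ) - 1) 2) (p n) (fdiff p 1 (n - 1))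
        (fdiff p 2 (n - 2)) using 1
      funext x; simp only [r, hrm2]; module
    · convert quadratic_mem_polyMaps (σ := Fin 4) 2 2 (-((n : ℝ) / m)) 0 0 (p n)
        (fdiff p 1 (n - 1)) 0 using 1
      funext x; simp only [r, hrm1]; module
    · simpa [r, hrm] using const_mem_polyMaps (p n)
  have hr : ∀ i ∈ Finset.range (m + 1), r i ∈ polyMaps (Fin 4) ℝ _ 2 := by
    intro i hi
    by_cases hin : 3 ≤ i ∧ i ≤ m - 3
    · rw [show r i = _ from funext fun x => hrin (x 0) (x 1) (x 2) (x 3) i hin.1 hin.2]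
      refine finsetSum_mem_polyMaps fun j _ => Submodule.smul_mem _ _ (sub_mem
        (const_mem_polyMaps _) (Submodule.smul_mem _ _ (finsetSum_mem_polyMaps fun h hh => ?_)))
      obtain ⟨hh, hbd⟩ := Finset.mem_filter.1 hh
      exact Submodule.smul_mem _ _ (hbdry h (Nat.lt_succ_iff.1 (Finset.mem_range.1 hh)) hbd)
    · exact hbdry i (Nat.lt_succ_iff.1 (Finset.mem_range.1 hi)) (by omega)
  obtain ⟨F, hF, hEF⟩ := exists_eq_eval_of_mem_polyMaps
    (integral_mul_norm_sub_sum_smul_sq_mem_polyMaps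
      (intervalIntegrable_one_sub_rpow_mul_rpow hα hβ)
      ⟨fun t => ∑ i ∈ Finset.range (n + 1), bern n i t • p i, by unfold bern; fun_prop⟩
      (fun i => ⟨bern m i, by unfold bern; fun_prop⟩) (Finset.range (m + 1)) hr)
  exact ⟨F, hF, fun lam1 lam2 mu1 mu2 => congrFun hEF ![lam1, lam2, mu1, mu2]⟩

theorem stmt16 (α β : ℝ) (hα : -1 < α) (hβ : -1 < β) (d n m : ℕ)
    (hm : 4 < m) (hmn : m < n) (hn : 2 ≤ n)
    (p : ℕ → EuclideanSpace ℝ (Fin d))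
    -- the constrained dual Bernstein basis of `Π_m^{(2,2)}`
    (D : ℕ → Polynomial ℝ)
    (hDmem : ∀ i : ℕ, 3 ≤ i → i ≤ m - 3 → D i ∈ PiSpace m 2 2)
    (hdual : ∀ i j : ℕ, 3 ≤ i → i ≤ m - 3 → 3 ≤ j → j ≤ m - 3 →
      jacobiInner α β (D i) (bernsteinPolynomial ℝ m j) = if i = j then 1 else 0)
    -- the control points, as functions of the parameters λ₁, λ₂, μ₁, μ₂:
    (rf : ℝ → ℝ → ℝ → ℝ → ℕ → EuclideanSpace ℝ (Fin d))
    -- boundary control points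
    (hr0 : ∀ lam1 lam2 mu1 mu2 : ℝ, rf lam1 lam2 mu1 mu2 0 = p 0)
    (hr1 : ∀ lam1 lam2 mu1 mu2 : ℝ,
      rf lam1 lam2 mu1 mu2 1 = p 0 + ((n : ℝ) / (m : ℝ) * lam1) • fdiff p 1 0)
    (hr2 : ∀ lam1 lam2 mu1 mu2 : ℝ,
      rf lam1 lam2 mu1 mu2 2 = p 0 +
        ((n : ℝ) / (m : ℝ) * (2 * lam1 + lam2 / ((m : ℝ) - 1))) • fdiff p 1 0 +
        (poch ((n : ℝ) - 1) 2 / poch ((m : ℝ) - 1) 2 * lam1 ^ 2) • fdiff p 2 0)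
    (hrm2 : ∀ lam1 lam2 mu1 mu2 : ℝ,
      rf lam1 lam2 mu1 mu2 (m - 2) = p n -
        ((n : ℝ) / (m : ℝ) * (2 * mu1 - mu2 / ((m : ℝ) - 1))) • fdiff p 1 (n - 1) +
        (poch ((n : ℝ) - 1) 2 / poch ((m : ℝ) - 1) 2 * mu1 ^ 2) • fdiff p 2 (n - 2))
    (hrm1 : ∀ lam1 lam2 mu1 mu2 : ℝ,
      rf lam1 lam2 mu1 mu2 (m - 1) = p n - ((n : ℝ) / (m : ℝ) * mu1) • fdiff p 1 (n - 1))
    (hrm : ∀ lam1 lam2 mu1 mu2 : ℝ, rf lam1 lam2 mu1 mu2 m = p n)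
    -- inner control points: the unique minimizers for the fixed boundary points,
    -- given via the constrained dual Bernstein basis
    (hrin : ∀ (lam1 lam2 mu1 mu2 : ℝ) (i : ℕ), 3 ≤ i → i ≤ m - 3 →
      rf lam1 lam2 mu1 mu2 i = ∑ j ∈ Finset.range (n + 1),
        jacobiInner α β (bernsteinPolynomial ℝ n j) (D i) •
          (p j - ((n.choose j : ℝ))⁻¹ •
            ∑ h ∈ (Finset.range (m + 1)).filter (fun h : ℕ => h ≤ 2 ∨ m - 2 ≤ h),
              (chZ (n - m) ((j : ℤ) - (h : ℤ)) * (m.choose h : ℝ)) •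
                rf lam1 lam2 mu1 mu2 h)) :
    -- the error `E(λ₁, λ₂, μ₁, μ₂)` is a polynomial function of total degree at most 4
    ∃ F : MvPolynomial (Fin 4) ℝ, F.totalDegree ≤ 4 ∧
      ∀ lam1 lam2 mu1 mu2 : ℝ,
        (∫ t in (0:ℝ)..1, (1 - t) ^ α * t ^ β *
            ‖(∑ i ∈ Finset.range (n + 1), bern n i t • p i) -
              (∑ i ∈ Finset.range (m + 1), bern m i t • rf lam1 lam2 mu1 mu2 i)‖ ^ 2) =
          MvPolynomial.eval ![lam1, lam2, mu1, mu2] F :=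
  stmt16_general α β hα hβ d n m p D rf hr0 hr1 hr2 hrm2 hrm1 hrm hrin
end
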